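/- arXiv:1906.11472 — 3 statements merged into one kernel-verified Lean document; each statement's English description precedes it below -/
import Mathlib

section
/- For all smooth compactly supported maps u, v, w : ℝ² → ℝ², one has |b₁(u,v,w)| ≤ 2 ‖u‖_{L²}^{1/2} ‖∇u‖_{L²}^{1/2} ‖∇v‖_{L²} ‖w‖_{L²}^{1/2} ‖∇w‖_{L²}^{1/2}. (Lemma 2.1, estimate (2.3).) -/
open MeasureTheory Function Set ENNReal

/-- Cauchy–Schwarz for `Fin 2` sums. -/
private lemma cs_sq (a b : Fin 2 → ℝ) :
    (∑ i, a i * b i) ^ 2 ≤ (∑ i, a i ^ 2) * (∑ i, b i ^ 2) :=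
  Finset.sum_mul_sq_le_sq_mul_sq _ _ _

private lemma tri_sq (a c : Fin 2 → ℝ) (A : Fin 2 → Fin 2 → ℝ) :
    (∑ i, ∑ j, a i * A i j * c j) ^ 2 ≤
      (∑ j, a j ^ 2) * ((∑ i, ∑ j, A i j ^ 2) * (∑ j, c j ^ 2)) := by
  have h0 : (∑ i, ∑ j, a i * A i j * c j) = ∑ i, a i * (∑ j, A i j * c j) := by
    refine Finset.sum_congr rfl fun i _ => ?_
    rw [Finset.mul_sum]
    exact Finset.sum_congr rfl fun j _ => by ring
  rw [h0]
  calc (∑ i, a i * (∑ j, A i j * c j)) ^ 2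
      ≤ (∑ i, a i ^ 2) * (∑ i, (∑ j, A i j * c j) ^ 2) := cs_sq _ _
    _ ≤ (∑ i, a i ^ 2) * (∑ i, (∑ j, A i j ^ 2) * (∑ j, c j ^ 2)) := by
        gcongr with i _
        exact cs_sq _ _
    _ = (∑ j, a j ^ 2) * ((∑ i, ∑ j, A i j ^ 2) * (∑ j, c j ^ 2)) := by
        rw [← Finset.sum_mul]

/-- Hölder with exponents 2,2 for continuous compactly supported functions. -/
private lemma holder_two (f g : (Fin 2 → ℝ) → ℝ) (hfc : Continuous f) (hfs : HasCompactSupport f)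
    (hgc : Continuous g) (hgs : HasCompactSupport g) (hf0 : ∀ x, 0 ≤ f x) (hg0 : ∀ x, 0 ≤ g x) :
    ∫ x, f x * g x ≤ Real.sqrt (∫ x, f x ^ 2) * Real.sqrt (∫ x, g x ^ 2) := by
  have hpq : Real.HolderConjugate 2 2 := Real.holderConjugate_iff.mpr ⟨one_lt_two, by norm_num⟩
  have h := integral_mul_le_Lp_mul_Lq_of_nonneg (μ := volume) hpq
    (Filter.Eventually.of_forall hf0) (Filter.Eventually.of_forall hg0)
    (hfc.memLp_of_hasCompactSupport hfs) (hgc.memLp_of_hasCompactSupport hgs)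
  have h2 : ∀ r : ℝ, r ^ (2 : ℝ) = r ^ 2 := fun r => by
    rw [show (2:ℝ) = ((2:ℕ):ℝ) by norm_num, Real.rpow_natCast]
  simp only [h2] at h
  calc ∫ x, f x * g x ≤ (∫ x, f x ^ 2) ^ (1/2 : ℝ) * (∫ x, g x ^ 2) ^ (1/2 : ℝ) := h
    _ = _ := by rw [← Real.sqrt_eq_rpow, ← Real.sqrt_eq_rpow]

/-- 2D Nash-type core inequality via FTC + Fubini:
`∫ φ² ≤ (∫ |∂₀ φ|) * (∫ |∂₁ φ|)`. -/
private lemma lady_sq (φ : (Fin 2 → ℝ) → ℝ) (hφ : ContDiff ℝ 1 φ) (hs : HasCompactSupport φ) :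
    ∫ x : Fin 2 → ℝ, (φ x) ^ 2 ≤
      (∫ x : Fin 2 → ℝ, |fderiv ℝ φ x (Pi.single 0 1)|) *
      (∫ x : Fin 2 → ℝ, |fderiv ℝ φ x (Pi.single 1 1)|) := by
  classical
  set g : Fin 2 → (Fin 2 → ℝ) → ℝ := fun i y => fderiv ℝ φ y (Pi.single i 1) with hg
  have hgc : ∀ i, Continuous (g i) := by
    intro i
    have h1 : Continuous (fderiv ℝ φ) := hφ.continuous_fderiv one_ne_zero
    exact (ContinuousLinearMap.apply ℝ ℝ (Pi.single i (1:ℝ))).continuous.comp h1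
  have hgs : ∀ i, HasCompactSupport (g i) := fun i => hs.fderiv_apply ℝ (Pi.single i 1)
  have hgint : ∀ i, Integrable (g i) := fun i =>
    (hgc i).integrable_of_hasCompactSupport (hgs i)
  -- pointwise FTC bound
  have ftc : ∀ (i : Fin 2) (x : Fin 2 → ℝ),
      (‖φ x‖₊ : ℝ≥0∞) ≤ ∫⁻ t : ℝ, (‖g i (update x i t)‖₊ : ℝ≥0∞) := by
    intro i x
    have h1 : ContDiff ℝ 1 (φ ∘ update x i) := hφ.comp (by convert contDiff_update 1 x i)
    have h2 : HasCompactSupport (φ ∘ update x i) :=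
      hs.comp_isClosedEmbedding (isClosedEmbedding_update x i)
    have hder : ∀ t : ℝ, deriv (φ ∘ update x i) t = g i (update x i t) := by
      intro t
      have hD := ((hφ.differentiable one_ne_zero) (update x i t)).hasFDerivAt
      exact (hD.comp_hasDerivAt t (hasDerivAt_update x i t)).deriv
    calc (‖φ x‖₊ : ℝ≥0∞) = ‖(φ ∘ update x i) (x i)‖₊ := by
          simp [Function.comp, Function.update_eq_self]
      _ ≤ ∫⁻ t in Iic (x i), ‖deriv (φ ∘ update x i) t‖₊ :=
          h2.enorm_le_lintegral_Ici_deriv h1 (x i)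
      _ ≤ ∫⁻ t : ℝ, ‖deriv (φ ∘ update x i) t‖₊ :=
          lintegral_mono' Measure.restrict_le_self le_rfl
      _ = ∫⁻ t : ℝ, (‖g i (update x i t)‖₊ : ℝ≥0∞) := by simp_rw [hder]
  -- Fubini on ℝ × ℝ
  set e : (Fin 2 → ℝ) ≃ᵐ ℝ × ℝ := MeasurableEquiv.finTwoArrow
  have hvol : MeasurePreserving e volume volume := volume_preserving_finTwoArrow ℝ
  have hvs : MeasurePreserving e.symm volume volume := MeasurePreserving.symm e hvol
  set F : Fin 2 → (Fin 2 → ℝ) → ℝ≥0∞ := fun i y => (‖g i y‖₊ : ℝ≥0∞) with hF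
  have hFm : ∀ i, Measurable (F i) := fun i => (hgc i).measurable.nnnorm.coe_nnreal_ennreal
  have key : ∫⁻ x : Fin 2 → ℝ, (‖φ x‖₊ : ℝ≥0∞) ^ 2 ≤
      (∫⁻ x : Fin 2 → ℝ, F 0 x) * (∫⁻ x : Fin 2 → ℝ, F 1 x) := by
    have hupd0 : ∀ (p : ℝ × ℝ) (t : ℝ), update (e.symm p) 0 t = e.symm (t, p.2) := by
      intro p t; funext j; fin_cases j <;> simp [e, MeasurableEquiv.finTwoArrow, update]
    have hupd1 : ∀ (p : ℝ × ℝ) (t : ℝ), update (e.symm p) 1 t = e.symm (p.1, t) := by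
      intro p t; funext j; fin_cases j <;> simp [e, MeasurableEquiv.finTwoArrow, update]
    have hφm : Measurable fun x : Fin 2 → ℝ => (‖φ x‖₊ : ℝ≥0∞) ^ 2 :=
      (hφ.continuous.measurable.nnnorm.coe_nnreal_ennreal).pow_const 2
    have hF0' : Measurable fun p : ℝ × ℝ => F 0 (e.symm p) := (hFm 0).comp e.symm.measurable
    have hF1' : Measurable fun p : ℝ × ℝ => F 1 (e.symm p) := (hFm 1).comp e.symm.measurable
    set G0 : ℝ → ℝ≥0∞ := fun b => ∫⁻ t : ℝ, F 0 (e.symm (t, b)) with hG0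
    set G1 : ℝ → ℝ≥0∞ := fun a => ∫⁻ t : ℝ, F 1 (e.symm (a, t)) with hG1
    have hG0m : Measurable G0 := Measurable.lintegral_prod_right' (hF0'.comp measurable_swap)
    have hG1m : Measurable G1 := Measurable.lintegral_prod_right' hF1'
    have hInt1 : ∫⁻ a : ℝ, G1 a = ∫⁻ x : Fin 2 → ℝ, F 1 x := by
      rw [← hvs.lintegral_comp (hFm 1)]
      rw [Measure.volume_eq_prod, lintegral_prod _ hF1'.aemeasurable]
    have hInt0 : ∫⁻ b : ℝ, G0 b = ∫⁻ x : Fin 2 → ℝ, F 0 x := by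
      rw [← hvs.lintegral_comp (hFm 0)]
      rw [Measure.volume_eq_prod, lintegral_prod_symm _ hF0'.aemeasurable]
    calc ∫⁻ x : Fin 2 → ℝ, (‖φ x‖₊ : ℝ≥0∞) ^ 2
        = ∫⁻ p : ℝ × ℝ, (‖φ (e.symm p)‖₊ : ℝ≥0∞) ^ 2 := (hvs.lintegral_comp hφm).symm
      _ ≤ ∫⁻ p : ℝ × ℝ, G1 p.1 * G0 p.2 := by
          refine lintegral_mono fun p => ?_
          have h0 := ftc 0 (e.symm p)
          have h1 := ftc 1 (e.symm p)
          simp_rw [hupd0, hupd1] at h0 h1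
          calc (‖φ (e.symm p)‖₊ : ℝ≥0∞) ^ 2 = ‖φ (e.symm p)‖₊ * ‖φ (e.symm p)‖₊ := sq _
            _ ≤ G1 p.1 * G0 p.2 := mul_le_mul' h1 h0
      _ = (∫⁻ a : ℝ, G1 a) * (∫⁻ b : ℝ, G0 b) := by
          rw [Measure.volume_eq_prod, lintegral_prod_mul hG1m.aemeasurable hG0m.aemeasurable]
      _ = (∫⁻ x : Fin 2 → ℝ, F 0 x) * (∫⁻ x : Fin 2 → ℝ, F 1 x) := by
          rw [hInt1, hInt0, mul_comm]
  -- convert to Bochner integrals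
  have hφ2int : Integrable (fun x : Fin 2 → ℝ => φ x ^ 2) := by
    refine (hφ.continuous.pow 2).integrable_of_hasCompactSupport ?_
    have := hs.comp_left (g := fun r : ℝ => r ^ 2) (by simp)
    exact this
  have hL : ENNReal.ofReal (∫ x : Fin 2 → ℝ, φ x ^ 2) = ∫⁻ x : Fin 2 → ℝ, (‖φ x‖₊ : ℝ≥0∞) ^ 2 := by
    rw [ofReal_integral_eq_lintegral_ofReal hφ2int (Filter.Eventually.of_forall fun x => sq_nonneg _)]
    refine lintegral_congr fun x => ?_
    rw [← enorm_eq_nnnorm, Real.enorm_eq_ofReal_abs, ← ENNReal.ofReal_pow (abs_nonneg _), sq_abs]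
  have hR : ∀ i, (∫⁻ x : Fin 2 → ℝ, F i x) = ENNReal.ofReal (∫ x : Fin 2 → ℝ, |g i x|) := by
    intro i
    rw [ofReal_integral_eq_lintegral_ofReal (hgint i).abs
      (Filter.Eventually.of_forall fun x => abs_nonneg _)]
    refine lintegral_congr fun x => ?_
    exact Real.enorm_eq_ofReal_abs _
  rw [hL.symm, hR 0, hR 1, ← ENNReal.ofReal_mul (integral_nonneg fun x => abs_nonneg _)] at key
  exact (ENNReal.ofReal_le_ofReal_iff
    (mul_nonneg (integral_nonneg fun x => abs_nonneg _)
      (integral_nonneg fun x => abs_nonneg _))).1 key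

private lemma fderiv_sumsq (u : (Fin 2 → ℝ) → (Fin 2 → ℝ)) (hu : Differentiable ℝ u)
    (x : Fin 2 → ℝ) (h : Fin 2 → ℝ) :
    fderiv ℝ (fun y => ∑ j, u y j ^ 2) x h = ∑ j, 2 * u x j * fderiv ℝ u x h j := by
  have hj : ∀ j : Fin 2, HasFDerivAt (fun y => u y j)
      ((ContinuousLinearMap.proj j).comp (fderiv ℝ u x)) x :=
    fun j => (ContinuousLinearMap.proj (R := ℝ) (φ := fun _ : Fin 2 => ℝ) j).hasFDerivAt.comp x
      (hu x).hasFDerivAt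
  have H : HasFDerivAt (fun y => ∑ j : Fin 2, u y j * u y j)
      (∑ j : Fin 2, (u x j • ((ContinuousLinearMap.proj j).comp (fderiv ℝ u x)) +
        u x j • ((ContinuousLinearMap.proj j).comp (fderiv ℝ u x)))) x :=
    HasFDerivAt.fun_sum fun j _ => (hj j).mul (hj j)
  have hfun : (fun y => ∑ j : Fin 2, u y j ^ 2) = fun y => ∑ j : Fin 2, u y j * u y j := by
    funext y; exact Finset.sum_congr rfl fun j _ => sq (u y j)
  rw [hfun, H.fderiv]
  simp only [ContinuousLinearMap.add_apply, ContinuousLinearMap.sum_apply,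
    ContinuousLinearMap.smul_apply, ContinuousLinearMap.comp_apply,
    ContinuousLinearMap.proj_apply, smul_eq_mul]
  exact Finset.sum_congr rfl fun j _ => by ring

private lemma lady (u : (Fin 2 → ℝ) → (Fin 2 → ℝ)) (hu : ContDiff ℝ (⊤ : ℕ∞) u)
    (hus : HasCompactSupport u) :
    ∫ x : Fin 2 → ℝ, (∑ j, u x j ^ 2) ^ 2 ≤
      2 * (∫ x : Fin 2 → ℝ, ∑ j, u x j ^ 2) *
        (∫ x : Fin 2 → ℝ, ∑ i, ∑ j, (fderiv ℝ u x (Pi.single i 1) j) ^ 2) := by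
  have hud : Differentiable ℝ u := hu.differentiable (by simp)
  set φ : (Fin 2 → ℝ) → ℝ := fun x => ∑ j, u x j ^ 2 with hφdef
  set D : Fin 2 → (Fin 2 → ℝ) → ℝ :=
    fun i x => ∑ j, (fderiv ℝ u x (Pi.single i 1) j) ^ 2 with hDdef
  have hφ1 : ContDiff ℝ 1 φ :=
    (ContDiff.sum fun j _ => (contDiff_pi.mp hu j).pow 2).of_le (by simp)
  have hφs : HasCompactSupport φ :=
    hus.comp_left (g := fun v : Fin 2 → ℝ => ∑ j, v j ^ 2) (by simp)
  have hφ0 : ∀ x, 0 ≤ φ x := fun x => Finset.sum_nonneg fun j _ => sq_nonneg _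
  have hφc : Continuous φ := hφ1.continuous
  -- continuity and compact support of `D i`
  have hfd : Continuous (fderiv ℝ u) := hu.continuous_fderiv (by simp)
  have hDuc : ∀ i : Fin 2, Continuous fun x => fderiv ℝ u x (Pi.single i 1) := fun i =>
    (ContinuousLinearMap.apply ℝ (Fin 2 → ℝ) (Pi.single i 1)).continuous.comp hfd
  have hDus : ∀ i : Fin 2, HasCompactSupport fun x => fderiv ℝ u x (Pi.single i 1) :=
    fun i => hus.fderiv_apply ℝ (Pi.single i 1)
  have hDc : ∀ i : Fin 2, Continuous (D i) := fun i => by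
    refine continuous_finset_sum _ fun j _ => ?_
    exact (((continuous_apply j).comp (hDuc i)).pow 2)
  have hDs : ∀ i : Fin 2, HasCompactSupport (D i) := fun i =>
    (hDus i).comp_left (g := fun v : Fin 2 → ℝ => ∑ j, v j ^ 2) (by simp)
  have hD0 : ∀ i x, 0 ≤ D i x := fun i x => Finset.sum_nonneg fun j _ => sq_nonneg _
  -- continuity and compact support of `x ↦ fderiv φ x (single i 1)`
  have hgc : ∀ i : Fin 2, Continuous fun x => fderiv ℝ φ x (Pi.single i 1) := fun i =>
    (ContinuousLinearMap.apply ℝ ℝ (Pi.single i 1)).continuous.comp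
      (hφ1.continuous_fderiv one_ne_zero)
  have hgs : ∀ i : Fin 2, HasCompactSupport fun x => fderiv ℝ φ x (Pi.single i 1) :=
    fun i => hφs.fderiv_apply ℝ (Pi.single i 1)
  -- pointwise bound on the derivative of φ
  have hpt : ∀ (i : Fin 2) (x : Fin 2 → ℝ),
      |fderiv ℝ φ x (Pi.single i 1)| ≤ 2 * (Real.sqrt (φ x) * Real.sqrt (D i x)) := by
    intro i x
    have hdφ : fderiv ℝ φ x (Pi.single i 1) =
        ∑ j, 2 * u x j * fderiv ℝ u x (Pi.single i 1) j := fderiv_sumsq u hud x _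
    have h2 : fderiv ℝ φ x (Pi.single i 1) =
        2 * ∑ j, u x j * fderiv ℝ u x (Pi.single i 1) j := by
      rw [hdφ, Finset.mul_sum]
      exact Finset.sum_congr rfl fun j _ => by ring
    rw [h2, abs_mul, abs_two]
    have h3 : |∑ j, u x j * fderiv ℝ u x (Pi.single i 1) j| ≤
        Real.sqrt (φ x) * Real.sqrt (D i x) := by
      rw [← Real.sqrt_sq_eq_abs, ← Real.sqrt_mul (hφ0 x)]
      exact Real.sqrt_le_sqrt (cs_sq _ _)
    nlinarith [h3, abs_nonneg (∑ j, u x j * fderiv ℝ u x (Pi.single i 1) j)]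
  -- sqrt φ and sqrt (D i) continuous compactly supported
  have hsφc : Continuous fun x => Real.sqrt (φ x) := Real.continuous_sqrt.comp hφc
  have hsφs : HasCompactSupport fun x => Real.sqrt (φ x) :=
    hφs.comp_left (g := Real.sqrt) Real.sqrt_zero
  have hsDc : ∀ i : Fin 2, Continuous fun x => Real.sqrt (D i x) := fun i =>
    Real.continuous_sqrt.comp (hDc i)
  have hsDs : ∀ i : Fin 2, HasCompactSupport fun x => Real.sqrt (D i x) := fun i =>
    (hDs i).comp_left (g := Real.sqrt) Real.sqrt_zero
  -- integral bound on ∫ |∂ᵢ φ|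
  have hPle : ∀ i : Fin 2, (∫ x : Fin 2 → ℝ, |fderiv ℝ φ x (Pi.single i 1)|) ≤
      2 * (Real.sqrt (∫ x : Fin 2 → ℝ, φ x) * Real.sqrt (∫ x : Fin 2 → ℝ, D i x)) := by
    intro i
    have hint : Integrable (fun x : Fin 2 → ℝ =>
        2 * (Real.sqrt (φ x) * Real.sqrt (D i x))) := by
      refine (Continuous.integrable_of_hasCompactSupport (by fun_prop) ?_).const_mul 2
      exact (hsφs.mul_right : HasCompactSupport fun x => Real.sqrt (φ x) * Real.sqrt (D i x))
    calc (∫ x : Fin 2 → ℝ, |fderiv ℝ φ x (Pi.single i 1)|)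
        ≤ ∫ x : Fin 2 → ℝ, 2 * (Real.sqrt (φ x) * Real.sqrt (D i x)) := by
          refine integral_mono_of_nonneg (Filter.Eventually.of_forall fun x => abs_nonneg _)
            hint (Filter.Eventually.of_forall fun x => hpt i x)
      _ = 2 * ∫ x : Fin 2 → ℝ, Real.sqrt (φ x) * Real.sqrt (D i x) := by
          rw [integral_const_mul]
      _ ≤ 2 * (Real.sqrt (∫ x : Fin 2 → ℝ, Real.sqrt (φ x) ^ 2) *
            Real.sqrt (∫ x : Fin 2 → ℝ, Real.sqrt (D i x) ^ 2)) := by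
          have := holder_two _ _ hsφc hsφs (hsDc i) (hsDs i)
            (fun x => Real.sqrt_nonneg _) (fun x => Real.sqrt_nonneg _)
          linarith [this]
      _ = 2 * (Real.sqrt (∫ x : Fin 2 → ℝ, φ x) * Real.sqrt (∫ x : Fin 2 → ℝ, D i x)) := by
          congr 1
          · congr 1
            · congr 1
              exact integral_congr_ae (Filter.Eventually.of_forall fun x =>
                Real.sq_sqrt (hφ0 x))
            · congr 1
              exact integral_congr_ae (Filter.Eventually.of_forall fun x =>
                Real.sq_sqrt (hD0 i x))
  -- assemble
  have hmain := lady_sq φ hφ1 hφs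
  set S := ∫ x : Fin 2 → ℝ, φ x with hS
  set T : Fin 2 → ℝ := fun i => ∫ x : Fin 2 → ℝ, D i x with hT
  have hS0 : 0 ≤ S := integral_nonneg hφ0
  have hT0 : ∀ i, 0 ≤ T i := fun i => integral_nonneg (hD0 i)
  have hTsum : (∫ x : Fin 2 → ℝ, ∑ i, ∑ j, (fderiv ℝ u x (Pi.single i 1) j) ^ 2) =
      T 0 + T 1 := by
    rw [hT]
    rw [show (fun x : Fin 2 → ℝ => ∑ i, ∑ j, (fderiv ℝ u x (Pi.single i 1) j) ^ 2) =
      fun x => D 0 x + D 1 x from funext fun x => by rw [hDdef]; exact Fin.sum_univ_two _]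
    exact integral_add ((hDc 0).integrable_of_hasCompactSupport (hDs 0))
      ((hDc 1).integrable_of_hasCompactSupport (hDs 1))
  have hP0 : (0:ℝ) ≤ ∫ x : Fin 2 → ℝ, |fderiv ℝ φ x (Pi.single 0 1)| :=
    integral_nonneg fun x => abs_nonneg _
  have h4 : ∫ x : Fin 2 → ℝ, (φ x) ^ 2 ≤
      (2 * (Real.sqrt S * Real.sqrt (T 0))) * (2 * (Real.sqrt S * Real.sqrt (T 1))) := by
    refine le_trans hmain ?_
    refine mul_le_mul (hPle 0) (hPle 1) (integral_nonneg fun x => abs_nonneg _) ?_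
    positivity
  rw [hTsum]
  refine le_trans h4 ?_
  have e1 : Real.sqrt S * Real.sqrt S = S := Real.mul_self_sqrt hS0
  nlinarith [Real.sq_sqrt (hT0 0), Real.sq_sqrt (hT0 1), Real.sqrt_nonneg (T 0),
    Real.sqrt_nonneg (T 1), sq_nonneg (Real.sqrt (T 0) - Real.sqrt (T 1)),
    Real.sqrt_nonneg S, e1, hS0]

private lemma sqrt_sqrt_mul3 (a b : ℝ) (ha : 0 ≤ a) :
    Real.sqrt (Real.sqrt (2 * a * b)) =
      Real.sqrt (Real.sqrt 2) * (Real.sqrt (Real.sqrt a) * Real.sqrt (Real.sqrt b)) := by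
  rw [show 2 * a * b = 2 * (a * b) by ring, Real.sqrt_mul (by norm_num : (0:ℝ) ≤ 2),
    Real.sqrt_mul ha, Real.sqrt_mul (Real.sqrt_nonneg 2), Real.sqrt_mul (Real.sqrt_nonneg a)]

/-- Lemma 2.1, estimate (2.3):
`|b₁(u,v,w)| ≤ 2 ‖u‖_{L²}^{1/2} ‖∇u‖_{L²}^{1/2} ‖∇v‖_{L²} ‖w‖_{L²}^{1/2} ‖∇w‖_{L²}^{1/2}`
for smooth compactly supported `u v w : ℝ² → ℝ²`. -/
theorem b1_estimate
    (u v w : (Fin 2 → ℝ) → (Fin 2 → ℝ))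
    (hu : ContDiff ℝ (⊤ : ℕ∞) u) (hu_supp : HasCompactSupport u)
    (hv : ContDiff ℝ (⊤ : ℕ∞) v) (hv_supp : HasCompactSupport v)
    (hw : ContDiff ℝ (⊤ : ℕ∞) w) (hw_supp : HasCompactSupport w) :
    |∫ x : Fin 2 → ℝ, ∑ i, ∑ j, u x i * fderiv ℝ v x (Pi.single i 1) j * w x j|
      ≤ 2 * (∫ x : Fin 2 → ℝ, ∑ j, (u x j) ^ 2) ^ ((1 : ℝ) / 4)
          * (∫ x : Fin 2 → ℝ, ∑ i, ∑ j, (fderiv ℝ u x (Pi.single i 1) j) ^ 2) ^ ((1 : ℝ) / 4)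
          * (∫ x : Fin 2 → ℝ, ∑ i, ∑ j, (fderiv ℝ v x (Pi.single i 1) j) ^ 2) ^ ((1 : ℝ) / 2)
          * (∫ x : Fin 2 → ℝ, ∑ j, (w x j) ^ 2) ^ ((1 : ℝ) / 4)
          * (∫ x : Fin 2 → ℝ, ∑ i, ∑ j, (fderiv ℝ w x (Pi.single i 1) j) ^ 2) ^ ((1 : ℝ) / 4) := by
  classical
  -- notation
  set Nu : (Fin 2 → ℝ) → ℝ := fun x => ∑ j, u x j ^ 2 with hNudef
  set Nw : (Fin 2 → ℝ) → ℝ := fun x => ∑ j, w x j ^ 2 with hNwdef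
  set Dv : (Fin 2 → ℝ) → ℝ := fun x => ∑ i, ∑ j, (fderiv ℝ v x (Pi.single i 1) j) ^ 2 with hDvdef
  set T : (Fin 2 → ℝ) → ℝ :=
    fun x => ∑ i, ∑ j, u x i * fderiv ℝ v x (Pi.single i 1) j * w x j with hTdef
  have hNu0 : ∀ x, 0 ≤ Nu x := fun x => Finset.sum_nonneg fun j _ => sq_nonneg _
  have hNw0 : ∀ x, 0 ≤ Nw x := fun x => Finset.sum_nonneg fun j _ => sq_nonneg _
  have hDv0 : ∀ x, 0 ≤ Dv x := fun x =>
    Finset.sum_nonneg fun i _ => Finset.sum_nonneg fun j _ => sq_nonneg _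
  -- continuity and compact support
  have hNuc : Continuous Nu := by
    refine continuous_finset_sum _ fun j _ => ?_
    exact ((continuous_apply j).comp hu.continuous).pow 2
  have hNus : HasCompactSupport Nu :=
    hu_supp.comp_left (g := fun y : Fin 2 → ℝ => ∑ j, y j ^ 2) (by simp)
  have hNwc : Continuous Nw := by
    refine continuous_finset_sum _ fun j _ => ?_
    exact ((continuous_apply j).comp hw.continuous).pow 2
  have hNws : HasCompactSupport Nw :=
    hw_supp.comp_left (g := fun y : Fin 2 → ℝ => ∑ j, y j ^ 2) (by simp)
  have hfdv : Continuous (fderiv ℝ v) := hv.continuous_fderiv (by simp)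
  have hDvc : Continuous Dv := by
    refine continuous_finset_sum _ fun i _ => continuous_finset_sum _ fun j _ => ?_
    exact (((continuous_apply j).comp
      ((ContinuousLinearMap.apply ℝ (Fin 2 → ℝ) (Pi.single i 1)).continuous.comp hfdv)).pow 2)
  have hfdvs : HasCompactSupport (fderiv ℝ v) := hv_supp.fderiv ℝ
  have hDvs : HasCompactSupport Dv := by
    have : Dv = (fun L : (Fin 2 → ℝ) →L[ℝ] (Fin 2 → ℝ) =>
        ∑ i, ∑ j, (L (Pi.single i 1) j) ^ 2) ∘ (fderiv ℝ v) := rfl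
    rw [this]
    exact hfdvs.comp_left (by simp)
  -- square roots
  have hsNuc : Continuous fun x => Real.sqrt (Nu x) := Real.continuous_sqrt.comp hNuc
  have hsNus : HasCompactSupport fun x => Real.sqrt (Nu x) :=
    hNus.comp_left (g := Real.sqrt) Real.sqrt_zero
  have hsNwc : Continuous fun x => Real.sqrt (Nw x) := Real.continuous_sqrt.comp hNwc
  have hsNws : HasCompactSupport fun x => Real.sqrt (Nw x) :=
    hNws.comp_left (g := Real.sqrt) Real.sqrt_zero
  have hsDvc : Continuous fun x => Real.sqrt (Dv x) := Real.continuous_sqrt.comp hDvc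
  have hsDvs : HasCompactSupport fun x => Real.sqrt (Dv x) :=
    hDvs.comp_left (g := Real.sqrt) Real.sqrt_zero
  -- pointwise bound
  have hpt : ∀ x, |T x| ≤ (Real.sqrt (Nu x) * Real.sqrt (Nw x)) * Real.sqrt (Dv x) := by
    intro x
    have h := tri_sq (u x) (w x) (fun i j => fderiv ℝ v x (Pi.single i 1) j)
    calc |T x| = Real.sqrt ((T x) ^ 2) := (Real.sqrt_sq_eq_abs _).symm
      _ ≤ Real.sqrt (Nu x * (Dv x * Nw x)) := Real.sqrt_le_sqrt h
      _ = Real.sqrt (Nu x) * (Real.sqrt (Dv x) * Real.sqrt (Nw x)) := by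
          rw [Real.sqrt_mul (hNu0 x), Real.sqrt_mul (hDv0 x)]
      _ = (Real.sqrt (Nu x) * Real.sqrt (Nw x)) * Real.sqrt (Dv x) := by ring
  -- |∫ T| ≤ ∫ (√Nu √Nw) √Dv
  have hfg_int : Integrable (fun x : Fin 2 → ℝ =>
      (Real.sqrt (Nu x) * Real.sqrt (Nw x)) * Real.sqrt (Dv x)) := by
    refine Continuous.integrable_of_hasCompactSupport (by fun_prop) ?_
    exact (hsNus.mul_right.mul_right :
      HasCompactSupport fun x => (Real.sqrt (Nu x) * Real.sqrt (Nw x)) * Real.sqrt (Dv x))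
  have step1 : |∫ x : Fin 2 → ℝ, T x| ≤
      ∫ x : Fin 2 → ℝ, (Real.sqrt (Nu x) * Real.sqrt (Nw x)) * Real.sqrt (Dv x) := by
    calc |∫ x : Fin 2 → ℝ, T x| = ‖∫ x : Fin 2 → ℝ, T x‖ := (Real.norm_eq_abs _).symm
      _ ≤ ∫ x : Fin 2 → ℝ, ‖T x‖ := norm_integral_le_integral_norm _
      _ ≤ _ := by
          refine integral_mono_of_nonneg (Filter.Eventually.of_forall fun x => norm_nonneg _)
            hfg_int (Filter.Eventually.of_forall fun x => ?_)
          simpa [Real.norm_eq_abs] using hpt x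
  -- Hölder 1
  have step2 : ∫ x : Fin 2 → ℝ, (Real.sqrt (Nu x) * Real.sqrt (Nw x)) * Real.sqrt (Dv x) ≤
      Real.sqrt (∫ x : Fin 2 → ℝ, Nu x * Nw x) * Real.sqrt (∫ x : Fin 2 → ℝ, Dv x) := by
    have h := holder_two (fun x => Real.sqrt (Nu x) * Real.sqrt (Nw x))
      (fun x => Real.sqrt (Dv x)) (hsNuc.mul hsNwc) hsNus.mul_right hsDvc hsDvs
      (fun x => mul_nonneg (Real.sqrt_nonneg _) (Real.sqrt_nonneg _))
      (fun x => Real.sqrt_nonneg _)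
    have e1 : (∫ x : Fin 2 → ℝ, (Real.sqrt (Nu x) * Real.sqrt (Nw x)) ^ 2) =
        ∫ x : Fin 2 → ℝ, Nu x * Nw x := by
      refine integral_congr_ae (Filter.Eventually.of_forall fun x => ?_)
      show (Real.sqrt (Nu x) * Real.sqrt (Nw x)) ^ 2 = Nu x * Nw x
      rw [mul_pow, Real.sq_sqrt (hNu0 x), Real.sq_sqrt (hNw0 x)]
    have e2 : (∫ x : Fin 2 → ℝ, Real.sqrt (Dv x) ^ 2) = ∫ x : Fin 2 → ℝ, Dv x := by
      refine integral_congr_ae (Filter.Eventually.of_forall fun x => ?_)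
      show Real.sqrt (Dv x) ^ 2 = Dv x
      rw [Real.sq_sqrt (hDv0 x)]
    rw [e1, e2] at h
    exact h
  -- Hölder 2
  have step3 : ∫ x : Fin 2 → ℝ, Nu x * Nw x ≤
      Real.sqrt (∫ x : Fin 2 → ℝ, (Nu x) ^ 2) * Real.sqrt (∫ x : Fin 2 → ℝ, (Nw x) ^ 2) :=
    holder_two Nu Nw hNuc hNus hNwc hNws hNu0 hNw0
  -- Ladyzhenskaya for u and w
  have hlu := lady u hu hu_supp
  have hlw := lady w hw hw_supp
  -- abbreviations for the integrals
  set AU := ∫ x : Fin 2 → ℝ, Nu x with hAU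
  set BU := ∫ x : Fin 2 → ℝ, ∑ i, ∑ j, (fderiv ℝ u x (Pi.single i 1) j) ^ 2 with hBU
  set CV := ∫ x : Fin 2 → ℝ, Dv x with hCV
  set AW := ∫ x : Fin 2 → ℝ, Nw x with hAW
  set BW := ∫ x : Fin 2 → ℝ, ∑ i, ∑ j, (fderiv ℝ w x (Pi.single i 1) j) ^ 2 with hBW
  have hAU0 : 0 ≤ AU := integral_nonneg hNu0
  have hAW0 : 0 ≤ AW := integral_nonneg hNw0
  have hCV0 : 0 ≤ CV := integral_nonneg hDv0
  have hBU0 : 0 ≤ BU := integral_nonneg fun x =>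
    Finset.sum_nonneg fun i _ => Finset.sum_nonneg fun j _ => sq_nonneg _
  have hBW0 : 0 ≤ BW := integral_nonneg fun x =>
    Finset.sum_nonneg fun i _ => Finset.sum_nonneg fun j _ => sq_nonneg _
  -- chain of square-root estimates
  have hNN0 : 0 ≤ ∫ x : Fin 2 → ℝ, Nu x * Nw x :=
    integral_nonneg fun x => mul_nonneg (hNu0 x) (hNw0 x)
  have step4 : Real.sqrt (∫ x : Fin 2 → ℝ, Nu x * Nw x) ≤
      Real.sqrt (Real.sqrt (2 * AU * BU)) * Real.sqrt (Real.sqrt (2 * AW * BW)) := by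
    rw [← Real.sqrt_mul (Real.sqrt_nonneg _)]
    refine Real.sqrt_le_sqrt (le_trans step3 ?_)
    exact mul_le_mul (Real.sqrt_le_sqrt hlu) (Real.sqrt_le_sqrt hlw)
      (Real.sqrt_nonneg _) (Real.sqrt_nonneg _)
  -- final numeric assembly
  set Q : ℝ := Real.sqrt (Real.sqrt AU) * Real.sqrt (Real.sqrt BU) * Real.sqrt CV *
      Real.sqrt (Real.sqrt AW) * Real.sqrt (Real.sqrt BW) with hQ
  have hQ0 : 0 ≤ Q := by positivity
  have hmain : |∫ x : Fin 2 → ℝ, T x| ≤ Real.sqrt 2 * Q := by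
    have h5 : |∫ x : Fin 2 → ℝ, T x| ≤
        (Real.sqrt (Real.sqrt (2 * AU * BU)) * Real.sqrt (Real.sqrt (2 * AW * BW))) *
          Real.sqrt CV := by
      refine le_trans step1 (le_trans step2 ?_)
      refine mul_le_mul_of_nonneg_right (le_trans (Real.sqrt_le_sqrt ?_) step4)
        (Real.sqrt_nonneg _)
      exact le_refl _
    refine le_trans h5 (le_of_eq ?_)
    rw [sqrt_sqrt_mul3 AU BU hAU0, sqrt_sqrt_mul3 AW BW hAW0]
    have h2 : Real.sqrt (Real.sqrt 2) * Real.sqrt (Real.sqrt 2) = Real.sqrt 2 :=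
      Real.mul_self_sqrt (Real.sqrt_nonneg 2)
    calc (Real.sqrt (Real.sqrt 2) * (Real.sqrt (Real.sqrt AU) * Real.sqrt (Real.sqrt BU)) *
          (Real.sqrt (Real.sqrt 2) * (Real.sqrt (Real.sqrt AW) * Real.sqrt (Real.sqrt BW)))) *
          Real.sqrt CV
        = (Real.sqrt (Real.sqrt 2) * Real.sqrt (Real.sqrt 2)) * Q := by rw [hQ]; ring
      _ = Real.sqrt 2 * Q := by rw [h2]
  -- convert the rpow goal to sqrt form
  have hr4 : ∀ x : ℝ, 0 ≤ x → x ^ ((1:ℝ)/4) = Real.sqrt (Real.sqrt x) := by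
    intro x hx
    rw [Real.sqrt_eq_rpow, Real.sqrt_eq_rpow, ← Real.rpow_mul hx]
    norm_num
  have hr2 : ∀ x : ℝ, 0 ≤ x → x ^ ((1:ℝ)/2) = Real.sqrt x := fun x hx =>
    (Real.sqrt_eq_rpow x).symm
  rw [hr4 AU hAU0, hr4 BU hBU0, hr2 CV hCV0, hr4 AW hAW0, hr4 BW hBW0]
  have hsqrt2 : Real.sqrt 2 ≤ 2 := by
    nlinarith [Real.sq_sqrt (by norm_num : (0:ℝ) ≤ 2), Real.sqrt_nonneg 2]
  calc |∫ x : Fin 2 → ℝ, T x| ≤ Real.sqrt 2 * Q := hmain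
    _ ≤ 2 * Q := mul_le_mul_of_nonneg_right hsqrt2 hQ0
    _ = _ := by rw [hQ]; ring
end

section
/- There exists a constant C > 0 such that for all smooth compactly supported d, b : ℝ² → ℝ³ and all smooth compactly supported v : ℝ² → ℝ², one has |m(d,b,v)| ≤ C ‖d‖_{H¹}^{1/2} ‖d‖_{H²}^{1/2} ‖b‖_{H¹}^{1/2} ‖b‖_{H²}^{1/2} ‖∇v‖_{L²}, where m(d,b,v) = ∫_{ℝ²} Σ_{i,j=1}^{2} Σ_{k=1}^{3} (∂_i dᵏ)(∂_j bᵏ)(∂_i vʲ) dx. (Lemma 2.3.) -/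
open MeasureTheory

open scoped ENNReal NNReal



lemma opnorm_le2 (L : (Fin 2 → ℝ) →L[ℝ] ℝ) :
    ‖L‖ ≤ |L (Pi.single 0 1)| + |L (Pi.single 1 1)| := by
  apply ContinuousLinearMap.opNorm_le_bound _ (by positivity)
  intro x
  have hx : x = x 0 • (Pi.single 0 1 : Fin 2 → ℝ) + x 1 • (Pi.single 1 1 : Fin 2 → ℝ) := by
    funext j; fin_cases j <;> simp
  calc ‖L x‖ = ‖x 0 • L (Pi.single 0 1) + x 1 • L (Pi.single 1 1)‖ := by
        conv_lhs => rw [hx]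
        rw [map_add, _root_.map_smul, _root_.map_smul]
    _ ≤ ‖x 0 • L (Pi.single 0 1)‖ + ‖x 1 • L (Pi.single 1 1)‖ := norm_add_le _ _
    _ = |x 0| * |L (Pi.single 0 1)| + |x 1| * |L (Pi.single 1 1)| := by
        simp [norm_smul, Real.norm_eq_abs]
    _ ≤ ‖x‖ * |L (Pi.single 0 1)| + ‖x‖ * |L (Pi.single 1 1)| := by
        gcongr <;> [exact norm_le_pi_norm x 0; exact norm_le_pi_norm x 1]
    _ = (|L (Pi.single 0 1)| + |L (Pi.single 1 1)|) * ‖x‖ := by ring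

lemma opnorm_sq_le2 (L : (Fin 2 → ℝ) →L[ℝ] ℝ) :
    ‖L‖ ^ 2 ≤ 2 * ((L (Pi.single 0 1)) ^ 2 + (L (Pi.single 1 1)) ^ 2) := by
  have h := opnorm_le2 L
  have h0 : (0:ℝ) ≤ ‖L‖ := norm_nonneg _
  calc ‖L‖ ^ 2 ≤ (|L (Pi.single 0 1)| + |L (Pi.single 1 1)|) ^ 2 := by
        apply pow_le_pow_left₀ h0 h 2
    _ ≤ 2 * ((L (Pi.single 0 1)) ^ 2 + (L (Pi.single 1 1)) ^ 2) := by
        rw [add_sq]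
        have := abs_nonneg (L (Pi.single 0 1))
        have := abs_nonneg (L (Pi.single 1 1))
        nlinarith [sq_abs (L (Pi.single 0 1)), sq_abs (L (Pi.single 1 1)),
          sq_nonneg (|L (Pi.single 0 1)| - |L (Pi.single 1 1)|)]


lemma holder3 (f g h : (Fin 2 → ℝ) → ℝ)
    (hf : Continuous f) (hg : Continuous g) (hh : Continuous h) :
    ∫⁻ x, (‖f x‖₊ : ℝ≥0∞) * ‖g x‖₊ * ‖h x‖₊
      ≤ eLpNorm f 4 volume * eLpNorm g 4 volume * eLpNorm h 2 volume := by
  have hmf := hf.measurable.nnnorm.coe_nnreal_ennreal.aemeasurable (μ := (volume : Measure (Fin 2 → ℝ)))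
  have hmg := hg.measurable.nnnorm.coe_nnreal_ennreal.aemeasurable (μ := (volume : Measure (Fin 2 → ℝ)))
  have hmh := hh.measurable.nnnorm.coe_nnreal_ennreal.aemeasurable (μ := (volume : Measure (Fin 2 → ℝ)))
  have conj : Real.HolderConjugate 2 2 := Real.holderConjugate_iff.mpr ⟨one_lt_two, by norm_num⟩
  have h1 := ENNReal.lintegral_mul_le_Lp_mul_Lq (volume : Measure (Fin 2 → ℝ)) conj
    (hmf.mul hmg) hmh
  have h2 := ENNReal.lintegral_mul_le_Lp_mul_Lq (volume : Measure (Fin 2 → ℝ)) conj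
    (hmf.pow_const (2:ℝ)) (hmg.pow_const (2:ℝ))
  -- rewrite squares of products
  have e4 : ∀ (w : (Fin 2 → ℝ) → ℝ), (∫⁻ x, (‖w x‖₊ : ℝ≥0∞) ^ (4:ℝ)) ^ ((1:ℝ)/4)
      = eLpNorm w 4 volume := by
    intro w
    rw [eLpNorm_eq_lintegral_rpow_enorm_toReal (by norm_num) (by norm_num)]
    norm_num
    rfl
  have e2 : ∀ (w : (Fin 2 → ℝ) → ℝ), (∫⁻ x, (‖w x‖₊ : ℝ≥0∞) ^ (2:ℝ)) ^ ((1:ℝ)/2)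
      = eLpNorm w 2 volume := by
    intro w
    rw [eLpNorm_eq_lintegral_rpow_enorm_toReal (by norm_num) (by norm_num)]
    norm_num
    rfl
  have sq_prod : (fun x => ((‖f x‖₊ : ℝ≥0∞) * ‖g x‖₊) ^ (2:ℝ))
      = fun x => ((‖f x‖₊ : ℝ≥0∞)) ^ (2:ℝ) * ((‖g x‖₊ : ℝ≥0∞)) ^ (2:ℝ) := by
    funext x; rw [ENNReal.mul_rpow_of_nonneg _ _ (by norm_num)]
  have pow4 : ∀ (w : (Fin 2 → ℝ) → ℝ) x, (((‖w x‖₊ : ℝ≥0∞)) ^ (2:ℝ)) ^ (2:ℝ)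
      = ((‖w x‖₊ : ℝ≥0∞)) ^ (4:ℝ) := by
    intro w x
    rw [← ENNReal.rpow_mul]; norm_num
  calc ∫⁻ x, (‖f x‖₊ : ℝ≥0∞) * ‖g x‖₊ * ‖h x‖₊
      ≤ (∫⁻ x, ((‖f x‖₊ : ℝ≥0∞) * ‖g x‖₊) ^ (2:ℝ)) ^ ((1:ℝ)/2)
        * (∫⁻ x, ((‖h x‖₊ : ℝ≥0∞)) ^ (2:ℝ)) ^ ((1:ℝ)/2) := h1
    _ ≤ ((∫⁻ x, ((‖f x‖₊ : ℝ≥0∞)) ^ (4:ℝ)) ^ ((1:ℝ)/2)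
          * (∫⁻ x, ((‖g x‖₊ : ℝ≥0∞)) ^ (4:ℝ)) ^ ((1:ℝ)/2)) ^ ((1:ℝ)/2)
        * (∫⁻ x, ((‖h x‖₊ : ℝ≥0∞)) ^ (2:ℝ)) ^ ((1:ℝ)/2) := by
        refine mul_le_mul_left (ENNReal.rpow_le_rpow ?_ (by norm_num)) _
        rw [sq_prod]
        calc ∫⁻ x, ((‖f x‖₊ : ℝ≥0∞)) ^ (2:ℝ) * ((‖g x‖₊ : ℝ≥0∞)) ^ (2:ℝ)
            ≤ (∫⁻ x, (((‖f x‖₊ : ℝ≥0∞)) ^ (2:ℝ)) ^ (2:ℝ)) ^ ((1:ℝ)/2)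
              * (∫⁻ x, (((‖g x‖₊ : ℝ≥0∞)) ^ (2:ℝ)) ^ (2:ℝ)) ^ ((1:ℝ)/2) := h2
          _ = (∫⁻ x, ((‖f x‖₊ : ℝ≥0∞)) ^ (4:ℝ)) ^ ((1:ℝ)/2)
              * (∫⁻ x, ((‖g x‖₊ : ℝ≥0∞)) ^ (4:ℝ)) ^ ((1:ℝ)/2) := by
              simp_rw [pow4]
    _ = eLpNorm f 4 volume * eLpNorm g 4 volume * eLpNorm h 2 volume := by
        rw [← e4 f, ← e4 g, ← e2 h,
          ENNReal.mul_rpow_of_nonneg _ _ (by norm_num : (0:ℝ) ≤ 1/2),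
          ← ENNReal.rpow_mul, ← ENNReal.rpow_mul]
        norm_num

lemma l2sq_le {Y : Type*} [NormedAddCommGroup Y] (F : (Fin 2 → ℝ) → Y)
    (φ : (Fin 2 → ℝ) → ℝ) (hφ : Integrable φ (volume : Measure (Fin 2 → ℝ)))
    (hb : ∀ x, ‖F x‖ ^ 2 ≤ φ x) :
    eLpNorm F 2 volume ≤ ENNReal.ofReal (∫ x, φ x) ^ ((1:ℝ)/2) := by
  have hφ0 : ∀ x, 0 ≤ φ x := fun x => le_trans (sq_nonneg _) (hb x)
  rw [eLpNorm_eq_lintegral_rpow_enorm_toReal (by norm_num) (by norm_num)]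
  simp only [ENNReal.toReal_ofNat]
  have key : ∫⁻ x, (‖F x‖₊ : ℝ≥0∞) ^ (2:ℝ) ≤ ENNReal.ofReal (∫ x, φ x) := by
    rw [ofReal_integral_eq_lintegral_ofReal hφ (Filter.Eventually.of_forall hφ0)]
    apply lintegral_mono
    intro x
    have h2 : ((‖F x‖₊ : ℝ≥0∞)) ^ (2:ℝ) = ENNReal.ofReal (‖F x‖ ^ 2) := by
      rw [← enorm_eq_nnnorm, ← ofReal_norm,
        ENNReal.ofReal_rpow_of_nonneg (norm_nonneg _) (by norm_num)]
      congr 1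
      rw [show ((2:ℝ)) = ((2:ℕ):ℝ) by norm_num, Real.rpow_natCast]
    calc ((‖F x‖₊ : ℝ≥0∞)) ^ (2:ℝ) = ENNReal.ofReal (‖F x‖ ^ 2) := h2
      _ ≤ ENNReal.ofReal (φ x) := ENNReal.ofReal_le_ofReal (hb x)
  calc (∫⁻ x, (‖F x‖₊ : ℝ≥0∞) ^ (2:ℝ)) ^ ((1:ℝ)/2)
      ≤ (ENNReal.ofReal (∫ x, φ x)) ^ ((1:ℝ)/2) := ENNReal.rpow_le_rpow key (by norm_num)


noncomputable def K0 : ℝ≥0 := eLpNormLESNormFDerivOneConst (volume : Measure (Fin 2 → ℝ)) (2:ℝ)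

lemma lady_s6 (f : (Fin 2 → ℝ) → ℝ) (hf : ContDiff ℝ (⊤ : ℕ∞) f) (hsf : HasCompactSupport f) :
    eLpNorm f 4 volume ^ (2:ℝ)
      ≤ (2 * K0) * eLpNorm f 2 volume * eLpNorm (fderiv ℝ f) 2 volume := by
  set u : (Fin 2 → ℝ) → ℝ := fun x => f x * f x with hu_def
  have hu : ContDiff ℝ 1 u := (hf.mul hf).of_le (by simp)
  have h2u : HasCompactSupport u := by
    have : HasCompactSupport (f * f) := hsf.mul_left
    exact this
  -- identity: eLpNorm u 2 = eLpNorm f 4 ^ 2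
  have eq1 : eLpNorm u 2 volume = eLpNorm f 4 volume ^ (2:ℝ) := by
    have h := eLpNorm_norm_rpow (p := 2) (μ := (volume : Measure (Fin 2 → ℝ))) f two_pos
    have h2 : (fun x => ‖f x‖ ^ (2:ℝ)) = u := by
      funext x
      rw [show ((2:ℝ) = ((2:ℕ):ℝ)) by norm_num, Real.rpow_natCast]
      simp [hu_def, sq_abs, sq]
    have h3 : (2 : ℝ≥0∞) * ENNReal.ofReal 2 = 4 := by
      rw [ENNReal.ofReal_ofNat]; norm_num
    rw [h2, h3] at h
    exact h
  -- GNS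
  have hconj : NNReal.HolderConjugate (Module.finrank ℝ (Fin 2 → ℝ)) 2 := by
    rw [show (Module.finrank ℝ (Fin 2 → ℝ)) = 2 by simp]
    exact NNReal.holderConjugate_iff.mpr ⟨one_lt_two, by rw [← NNReal.coe_inj]; push_cast; norm_num⟩
  have gns : eLpNorm u 2 volume ≤ K0 * eLpNorm (fderiv ℝ u) 1 volume :=
    eLpNorm_le_eLpNorm_fderiv_one volume hu h2u hconj
  -- bound eLpNorm (fderiv u) 1
  have hdiff : Differentiable ℝ f := hf.differentiable (by simp)
  have hfd : ∀ x, fderiv ℝ u x = (2 * f x) • fderiv ℝ f x := by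
    intro x
    rw [hu_def]
    rw [fderiv_fun_mul (hdiff x) (hdiff x)]
    rw [two_mul, add_smul]
  have hnn : ∀ x, (‖fderiv ℝ u x‖₊ : ℝ≥0∞) = 2 * ((‖f x‖₊ : ℝ≥0∞) * (‖fderiv ℝ f x‖₊ : ℝ≥0∞)) := by
    intro x
    rw [hfd x, nnnorm_smul]
    push_cast
    rw [show ‖(2 : ℝ) * f x‖₊ = 2 * ‖f x‖₊ by
      rw [nnnorm_mul]; congr 1; ext; simp]
    push_cast; ring
  have hmf : AEMeasurable (fun x => ((‖f x‖₊ : ℝ≥0∞))) volume :=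
    hf.continuous.measurable.nnnorm.coe_nnreal_ennreal.aemeasurable
  have hmdf : AEMeasurable (fun x => ((‖fderiv ℝ f x‖₊ : ℝ≥0∞))) volume :=
    ((hf.continuous_fderiv (by simp)).measurable.nnnorm.coe_nnreal_ennreal).aemeasurable
  have holder := ENNReal.lintegral_mul_le_Lp_mul_Lq (volume : Measure (Fin 2 → ℝ))
    (Real.holderConjugate_iff.mpr ⟨one_lt_two, by norm_num⟩ : Real.HolderConjugate 2 2) hmf hmdf
  -- rewrite Holder's RHS via eLpNorm
  have e2 : ∀ (g : (Fin 2 → ℝ) → ℝ), (∫⁻ x, (‖g x‖₊ : ℝ≥0∞) ^ (2:ℝ)) ^ ((1:ℝ)/2)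
      = eLpNorm g 2 volume := by
    intro g
    rw [eLpNorm_eq_lintegral_rpow_enorm_toReal (by norm_num) (by norm_num)]
    norm_num
    rfl
  have e2' : ∀ (g : (Fin 2 → ℝ) → ((Fin 2 → ℝ) →L[ℝ] ℝ)),
      (∫⁻ x, (‖g x‖₊ : ℝ≥0∞) ^ (2:ℝ)) ^ ((1:ℝ)/2) = eLpNorm g 2 volume := by
    intro g
    rw [eLpNorm_eq_lintegral_rpow_enorm_toReal (by norm_num) (by norm_num)]
    norm_num
    rfl
  have hl1 : eLpNorm (fderiv ℝ u) 1 volume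
      ≤ 2 * (eLpNorm f 2 volume * eLpNorm (fderiv ℝ f) 2 volume) := by
    rw [eLpNorm_one_eq_lintegral_enorm]
    calc ∫⁻ x, (‖fderiv ℝ u x‖₊ : ℝ≥0∞)
        = ∫⁻ x, 2 * ((‖f x‖₊ : ℝ≥0∞) * (‖fderiv ℝ f x‖₊ : ℝ≥0∞)) := by
          simp_rw [hnn]
      _ = 2 * ∫⁻ x, (‖f x‖₊ : ℝ≥0∞) * (‖fderiv ℝ f x‖₊ : ℝ≥0∞) :=
          lintegral_const_mul' 2 _ (by norm_num)
      _ ≤ 2 * ((∫⁻ x, (‖f x‖₊ : ℝ≥0∞) ^ (2:ℝ)) ^ ((1:ℝ)/2)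
            * (∫⁻ x, (‖fderiv ℝ f x‖₊ : ℝ≥0∞) ^ (2:ℝ)) ^ ((1:ℝ)/2)) := by
          exact mul_le_mul_right holder 2
      _ = 2 * (eLpNorm f 2 volume * eLpNorm (fderiv ℝ f) 2 volume) := by
          rw [e2, e2']
  calc eLpNorm f 4 volume ^ (2:ℝ) = eLpNorm u 2 volume := eq1.symm
    _ ≤ K0 * eLpNorm (fderiv ℝ u) 1 volume := gns
    _ ≤ K0 * (2 * (eLpNorm f 2 volume * eLpNorm (fderiv ℝ f) 2 volume)) :=
        mul_le_mul_right hl1 _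
    _ = 2 * K0 * eLpNorm f 2 volume * eLpNorm (fderiv ℝ f) 2 volume := by ring


lemma four_bound (f : (Fin 2 → ℝ) → ℝ) (hf : ContDiff ℝ (⊤ : ℕ∞) f) (hsf : HasCompactSupport f)
    (A B : ℝ≥0∞)
    (hA : eLpNorm f 2 volume ≤ A ^ ((1:ℝ)/2))
    (hB : eLpNorm (fderiv ℝ f) 2 volume ≤ B ^ ((1:ℝ)/2)) :
    eLpNorm f 4 volume
      ≤ ((2 * K0 : ℝ≥0∞)) ^ ((1:ℝ)/2) * A ^ ((1:ℝ)/4) * B ^ ((1:ℝ)/4) := by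
  have h := lady_s6 f hf hsf
  have h2 : eLpNorm f 4 volume ^ (2:ℝ)
      ≤ (2 * (K0:ℝ≥0∞)) * A ^ ((1:ℝ)/2) * B ^ ((1:ℝ)/2) := by
    refine le_trans h ?_
    gcongr
  calc eLpNorm f 4 volume = (eLpNorm f 4 volume ^ (2:ℝ)) ^ ((1:ℝ)/2) := by
        rw [← ENNReal.rpow_mul]; norm_num
    _ ≤ ((2 * (K0:ℝ≥0∞)) * A ^ ((1:ℝ)/2) * B ^ ((1:ℝ)/2)) ^ ((1:ℝ)/2) :=
        ENNReal.rpow_le_rpow h2 (by norm_num)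
    _ = ((2 * K0 : ℝ≥0∞)) ^ ((1:ℝ)/2) * A ^ ((1:ℝ)/4) * B ^ ((1:ℝ)/4) := by
        rw [ENNReal.mul_rpow_of_nonneg _ _ (by norm_num : (0:ℝ) ≤ 1/2),
          ENNReal.mul_rpow_of_nonneg _ _ (by norm_num : (0:ℝ) ≤ 1/2),
          ← ENNReal.rpow_mul, ← ENNReal.rpow_mul]
        norm_num

lemma comp_props {m : ℕ} (w : (Fin 2 → ℝ) → (Fin m → ℝ)) (hw : ContDiff ℝ (⊤ : ℕ∞) w)
    (hs : HasCompactSupport w) (i : Fin 2) (k : Fin m) :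
    ContDiff ℝ (⊤ : ℕ∞) (fun x => fderiv ℝ w x (Pi.single i 1) k) ∧
    HasCompactSupport (fun x => fderiv ℝ w x (Pi.single i 1) k) ∧
    ∀ x y, fderiv ℝ (fun z => fderiv ℝ w z (Pi.single i 1) k) x y
      = fderiv ℝ (fun z => fderiv ℝ w z (Pi.single i 1)) x y k := by
  have hDw : ContDiff ℝ (⊤ : ℕ∞) (fderiv ℝ w) := hw.fderiv_right (by simp)
  have hg : ContDiff ℝ (⊤ : ℕ∞) (fun z => fderiv ℝ w z (Pi.single i 1)) :=
    hDw.clm_apply contDiff_const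
  have hf : ContDiff ℝ (⊤ : ℕ∞) (fun z => fderiv ℝ w z (Pi.single i 1) k) :=
    contDiff_pi.1 hg k
  have hsD : HasCompactSupport (fderiv ℝ w) := hs.fderiv (𝕜 := ℝ)
  have hsg : HasCompactSupport (fun z => fderiv ℝ w z (Pi.single i 1)) :=
    hsD.comp_left (g := fun L : (Fin 2 → ℝ) →L[ℝ] (Fin m → ℝ) => L (Pi.single i 1)) rfl
  have hsf : HasCompactSupport (fun z => fderiv ℝ w z (Pi.single i 1) k) :=
    hsg.comp_left (g := fun y : Fin m → ℝ => y k) rfl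
  refine ⟨hf, hsf, fun x y => ?_⟩
  have hdg : DifferentiableAt ℝ (fun z => fderiv ℝ w z (Pi.single i 1)) x :=
    (hg.differentiable (by simp)) x
  have hcomp : fderiv ℝ (fun z => fderiv ℝ w z (Pi.single i 1) k) x
      = (ContinuousLinearMap.proj k : (Fin m → ℝ) →L[ℝ] ℝ).comp
          (fderiv ℝ (fun z => fderiv ℝ w z (Pi.single i 1)) x) := by
    have h := fderiv_comp x
      ((ContinuousLinearMap.proj k : (Fin m → ℝ) →L[ℝ] ℝ).differentiableAt) hdg
    simpa [ContinuousLinearMap.fderiv, Function.comp_def] using h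
  rw [hcomp]
  rfl

-- integrability helper
lemma cc_integrable (f : (Fin 2 → ℝ) → ℝ) (hc : Continuous f) (hs : HasCompactSupport f) :
    Integrable f (volume : Measure (Fin 2 → ℝ)) :=
  hc.integrable_of_hasCompactSupport hs

lemma hcs_sq (f : (Fin 2 → ℝ) → ℝ) (hs : HasCompactSupport f) :
    HasCompactSupport (fun x => f x ^ 2) :=
  hs.comp_left (g := fun t : ℝ => t ^ 2) (by norm_num)

lemma hcs_sum {ι : Type*} (s : Finset ι) (f : ι → (Fin 2 → ℝ) → ℝ)
    (h : ∀ i ∈ s, HasCompactSupport (f i)) :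
    HasCompactSupport (fun x => ∑ i ∈ s, f i x) := by
  classical
  induction s using Finset.induction_on with
  | empty => simpa using (by simp [HasCompactSupport, tsupport] :
      HasCompactSupport (fun _ : Fin 2 → ℝ => (0:ℝ)))
  | insert a s' hnotmem ih =>
      simp_rw [Finset.sum_insert hnotmem]
      exact (h a (Finset.mem_insert_self a s')).add
        (ih (fun i hi => h i (Finset.mem_insert_of_mem hi)))

lemma g_props {m : ℕ} (w : (Fin 2 → ℝ) → (Fin m → ℝ)) (hw : ContDiff ℝ (⊤ : ℕ∞) w)
    (hs : HasCompactSupport w) (i : Fin 2) :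
    ContDiff ℝ (⊤ : ℕ∞) (fun z => fderiv ℝ w z (Pi.single i 1)) ∧
    HasCompactSupport (fun z => fderiv ℝ w z (Pi.single i 1)) := by
  have hDw : ContDiff ℝ (⊤ : ℕ∞) (fderiv ℝ w) := hw.fderiv_right (by simp)
  have hsD : HasCompactSupport (fderiv ℝ w) := hs.fderiv (𝕜 := ℝ)
  exact ⟨hDw.clm_apply contDiff_const,
    hsD.comp_left (g := fun L : (Fin 2 → ℝ) →L[ℝ] (Fin m → ℝ) => L (Pi.single i 1)) rfl⟩

section mainW

variable (w : (Fin 2 → ℝ) → (Fin 3 → ℝ))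

-- integrands
private noncomputable def S1 (x : Fin 2 → ℝ) : ℝ := ∑ k, (w x k) ^ 2
private noncomputable def S2 (x : Fin 2 → ℝ) : ℝ := ∑ i, ∑ k, (fderiv ℝ w x (Pi.single i 1) k) ^ 2
private noncomputable def S3 (x : Fin 2 → ℝ) : ℝ := ∑ i, ∑ i', ∑ k,
  (fderiv ℝ (fun y => fderiv ℝ w y (Pi.single i' 1)) x (Pi.single i 1) k) ^ 2

variable (hw : ContDiff ℝ (⊤ : ℕ∞) w) (hsw : HasCompactSupport w)
include hw hsw

lemma S1_cont_int : Continuous (S1 w) ∧ Integrable (S1 w) (volume : Measure (Fin 2 → ℝ)) := by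
  have hc : Continuous (S1 w) :=
    continuous_finset_sum _ fun k _ => ((continuous_apply k).comp hw.continuous).pow 2
  have hs : HasCompactSupport (S1 w) :=
    hcs_sum Finset.univ (fun k x => (w x k) ^ 2)
      (fun k _ => hcs_sq _ (hsw.comp_left (g := fun y : Fin 3 → ℝ => y k) rfl))
  exact ⟨hc, cc_integrable _ hc hs⟩

lemma S2_cont_int : Continuous (S2 w) ∧ Integrable (S2 w) (volume : Measure (Fin 2 → ℝ)) := by
  have hc : Continuous (S2 w) :=
    continuous_finset_sum _ fun i _ => continuous_finset_sum _ fun k _ =>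
      ((comp_props w hw hsw i k).1.continuous).pow 2
  have hs : HasCompactSupport (S2 w) := by
    apply hcs_sum Finset.univ (fun i x => ∑ k, (fderiv ℝ w x (Pi.single i 1) k) ^ 2)
    intro i _
    apply hcs_sum Finset.univ (fun k x => (fderiv ℝ w x (Pi.single i 1) k) ^ 2)
    intro k _
    exact hcs_sq _ (comp_props w hw hsw i k).2.1
  exact ⟨hc, cc_integrable _ hc hs⟩

lemma S3_cont_int : Continuous (S3 w) ∧ Integrable (S3 w) (volume : Measure (Fin 2 → ℝ)) := by
  have hgc : ∀ i' i k, Continuous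
      (fun x => fderiv ℝ (fun y => fderiv ℝ w y (Pi.single i' 1)) x (Pi.single i 1) k) ∧
      HasCompactSupport
      (fun x => fderiv ℝ (fun y => fderiv ℝ w y (Pi.single i' 1)) x (Pi.single i 1) k) := by
    intro i' i k
    obtain ⟨hg1, hg2⟩ := g_props w hw hsw i'
    exact ⟨(comp_props _ hg1 hg2 i k).1.continuous, (comp_props _ hg1 hg2 i k).2.1⟩
  have hc : Continuous (S3 w) :=
    continuous_finset_sum _ fun i _ => continuous_finset_sum _ fun i' _ =>
      continuous_finset_sum _ fun k _ => ((hgc i' i k).1).pow 2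
  have hs : HasCompactSupport (S3 w) := by
    apply hcs_sum Finset.univ _ (fun i _ => ?_)
    apply hcs_sum Finset.univ _ (fun i' _ => ?_)
    apply hcs_sum Finset.univ _ (fun k _ => ?_)
    exact hcs_sq _ (hgc i' i k).2
  exact ⟨hc, cc_integrable _ hc hs⟩

lemma main_w_bound (i : Fin 2) (k : Fin 3) :
    eLpNorm (fun x => fderiv ℝ w x (Pi.single i 1) k) 4 volume
      ≤ ((2 * K0 : ℝ≥0∞)) ^ ((1:ℝ)/2)
        * (ENNReal.ofReal ((∫ x, S1 w x) + (∫ x, S2 w x))) ^ ((1:ℝ)/4)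
        * (ENNReal.ofReal (2 * ((∫ x, S1 w x) + (∫ x, S2 w x) + (∫ x, S3 w x)))) ^ ((1:ℝ)/4) := by
  obtain ⟨hf_smooth, hf_supp, hf_der⟩ := comp_props w hw hsw i k
  obtain ⟨hS1c, hS1i⟩ := S1_cont_int w hw hsw
  obtain ⟨hS2c, hS2i⟩ := S2_cont_int w hw hsw
  obtain ⟨hS3c, hS3i⟩ := S3_cont_int w hw hsw
  apply four_bound _ hf_smooth hf_supp
  · -- L² bound by first bracket
    have hφ : Integrable (fun x => S1 w x + S2 w x) (volume : Measure (Fin 2 → ℝ)) :=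
      hS1i.add hS2i
    have hb : ∀ x, ‖fderiv ℝ w x (Pi.single i 1) k‖ ^ 2 ≤ S1 w x + S2 w x := by
      intro x
      rw [Real.norm_eq_abs, sq_abs]
      have h1 : (fderiv ℝ w x (Pi.single i 1) k) ^ 2
          ≤ ∑ k', (fderiv ℝ w x (Pi.single i 1) k') ^ 2 :=
        Finset.single_le_sum (f := fun k' => (fderiv ℝ w x (Pi.single i 1) k') ^ 2)
          (fun _ _ => sq_nonneg _) (Finset.mem_univ k)
      have h2 : ∑ k', (fderiv ℝ w x (Pi.single i 1) k') ^ 2 ≤ S2 w x :=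
        Finset.single_le_sum
          (f := fun i' => ∑ k', (fderiv ℝ w x (Pi.single i' 1) k') ^ 2)
          (fun _ _ => Finset.sum_nonneg fun _ _ => sq_nonneg _) (Finset.mem_univ i)
      have h3 : (0:ℝ) ≤ S1 w x := Finset.sum_nonneg fun _ _ => sq_nonneg _
      linarith
    have := l2sq_le (fun x => fderiv ℝ w x (Pi.single i 1) k) _ hφ hb
    rwa [integral_add hS1i hS2i] at this
  · -- H¹-type bound for the gradient, by second bracket
    have hφ : Integrable (fun x => 2 * (S1 w x + S2 w x + S3 w x))
        (volume : Measure (Fin 2 → ℝ)) := ((hS1i.add hS2i).add hS3i).const_mul 2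
    have hb : ∀ x, ‖fderiv ℝ (fun z => fderiv ℝ w z (Pi.single i 1) k) x‖ ^ 2
        ≤ 2 * (S1 w x + S2 w x + S3 w x) := by
      intro x
      set L := fderiv ℝ (fun z => fderiv ℝ w z (Pi.single i 1) k) x with hL
      have hsq := opnorm_sq_le2 L
      have hder : ∀ i'' : Fin 2, L (Pi.single i'' 1)
          = fderiv ℝ (fun y => fderiv ℝ w y (Pi.single i 1)) x (Pi.single i'' 1) k :=
        fun i'' => hf_der x (Pi.single i'' 1)
      have hsum : (L (Pi.single 0 1)) ^ 2 + (L (Pi.single 1 1)) ^ 2 ≤ S3 w x := by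
        rw [hder 0, hder 1]
        have base : ∀ i'' : Fin 2,
            (fderiv ℝ (fun y => fderiv ℝ w y (Pi.single i 1)) x (Pi.single i'' 1) k) ^ 2
            ≤ ∑ i', ∑ k',
              (fderiv ℝ (fun y => fderiv ℝ w y (Pi.single i' 1)) x (Pi.single i'' 1) k') ^ 2 := by
          intro i''
          calc (fderiv ℝ (fun y => fderiv ℝ w y (Pi.single i 1)) x (Pi.single i'' 1) k) ^ 2
              ≤ ∑ k', (fderiv ℝ (fun y => fderiv ℝ w y (Pi.single i 1)) x (Pi.single i'' 1) k') ^ 2 :=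
                Finset.single_le_sum
                  (f := fun k' =>
                    (fderiv ℝ (fun y => fderiv ℝ w y (Pi.single i 1)) x (Pi.single i'' 1) k') ^ 2)
                  (fun _ _ => sq_nonneg _) (Finset.mem_univ k)
            _ ≤ ∑ i', ∑ k',
                (fderiv ℝ (fun y => fderiv ℝ w y (Pi.single i' 1)) x (Pi.single i'' 1) k') ^ 2 :=
                Finset.single_le_sum
                  (f := fun i' => ∑ k',
                    (fderiv ℝ (fun y => fderiv ℝ w y (Pi.single i' 1)) x (Pi.single i'' 1) k') ^ 2)
                  (fun _ _ => Finset.sum_nonneg fun _ _ => sq_nonneg _) (Finset.mem_univ i)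
        have expand : S3 w x = ∑ i'', ∑ i', ∑ k',
            (fderiv ℝ (fun y => fderiv ℝ w y (Pi.single i' 1)) x (Pi.single i'' 1) k') ^ 2 := rfl
        rw [expand, Fin.sum_univ_two]
        exact add_le_add (base 0) (base 1)
      have h1 : (0:ℝ) ≤ S1 w x := Finset.sum_nonneg fun _ _ => sq_nonneg _
      have h2 : (0:ℝ) ≤ S2 w x :=
        Finset.sum_nonneg fun _ _ => Finset.sum_nonneg fun _ _ => sq_nonneg _
      calc ‖L‖ ^ 2 ≤ 2 * ((L (Pi.single 0 1)) ^ 2 + (L (Pi.single 1 1)) ^ 2) := hsq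
        _ ≤ 2 * (S1 w x + S2 w x + S3 w x) := by linarith
    have := l2sq_le (fderiv ℝ (fun z => fderiv ℝ w z (Pi.single i 1) k)) _ hφ hb
    rwa [integral_const_mul,
      integral_add (f := fun a => S1 w a + S2 w a) (g := S3 w) (hS1i.add hS2i) hS3i,
      integral_add hS1i hS2i] at this

end mainW

lemma v_bound (v : (Fin 2 → ℝ) → (Fin 2 → ℝ)) (hv : ContDiff ℝ (⊤ : ℕ∞) v)
    (hsv : HasCompactSupport v) (i j : Fin 2) :
    eLpNorm (fun x => fderiv ℝ v x (Pi.single i 1) j) 2 volume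
      ≤ (ENNReal.ofReal (∫ x, ∑ i', ∑ j',
          (fderiv ℝ v x (Pi.single i' 1) j') ^ 2)) ^ ((1:ℝ)/2) := by
  have hc : Continuous (fun x => ∑ i', ∑ j', (fderiv ℝ v x (Pi.single i' 1) j') ^ 2) :=
    continuous_finset_sum _ fun i' _ => continuous_finset_sum _ fun j' _ =>
      ((comp_props v hv hsv i' j').1.continuous).pow 2
  have hs : HasCompactSupport (fun x => ∑ i', ∑ j', (fderiv ℝ v x (Pi.single i' 1) j') ^ 2) := by
    apply hcs_sum Finset.univ _ (fun i' _ => ?_)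
    apply hcs_sum Finset.univ _ (fun j' _ => ?_)
    exact hcs_sq _ (comp_props v hv hsv i' j').2.1
  apply l2sq_le _ _ (cc_integrable _ hc hs)
  intro x
  rw [Real.norm_eq_abs, sq_abs]
  calc (fderiv ℝ v x (Pi.single i 1) j) ^ 2
      ≤ ∑ j', (fderiv ℝ v x (Pi.single i 1) j') ^ 2 :=
        Finset.single_le_sum (f := fun j' => (fderiv ℝ v x (Pi.single i 1) j') ^ 2)
          (fun _ _ => sq_nonneg _) (Finset.mem_univ j)
    _ ≤ ∑ i', ∑ j', (fderiv ℝ v x (Pi.single i' 1) j') ^ 2 :=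
        Finset.single_le_sum (f := fun i' => ∑ j', (fderiv ℝ v x (Pi.single i' 1) j') ^ 2)
          (fun _ _ => Finset.sum_nonneg fun _ _ => sq_nonneg _) (Finset.mem_univ i)

lemma final_arith (K A1 A2 B1 B2 V : ℝ) (hK : 0 ≤ K) (hA1 : 0 ≤ A1) (hA2 : 0 ≤ A2)
    (hB1 : 0 ≤ B1) (hB2 : 0 ≤ B2) (hV : 0 ≤ V) :
    12 * (((2*K) ^ ((1:ℝ)/2) * A1 ^ ((1:ℝ)/4) * (2*A2) ^ ((1:ℝ)/4))
        * ((2*K) ^ ((1:ℝ)/2) * B1 ^ ((1:ℝ)/4) * (2*B2) ^ ((1:ℝ)/4))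
        * V ^ ((1:ℝ)/2))
      ≤ 48 * (K + 1) * A1 ^ ((1:ℝ)/4) * A2 ^ ((1:ℝ)/4) * B1 ^ ((1:ℝ)/4) * B2 ^ ((1:ℝ)/4)
        * V ^ ((1:ℝ)/2) := by
  have e1 : (2*A2) ^ ((1:ℝ)/4) = 2 ^ ((1:ℝ)/4) * A2 ^ ((1:ℝ)/4) :=
    Real.mul_rpow (by norm_num) hA2
  have e1' : (2*B2) ^ ((1:ℝ)/4) = 2 ^ ((1:ℝ)/4) * B2 ^ ((1:ℝ)/4) :=
    Real.mul_rpow (by norm_num) hB2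
  have e2 : (2*K) ^ ((1:ℝ)/2) * (2*K) ^ ((1:ℝ)/2) = 2*K := by
    rw [← Real.rpow_add' (by positivity) (by norm_num)]
    norm_num
  have e3 : (2:ℝ) ^ ((1:ℝ)/4) * 2 ^ ((1:ℝ)/4) = 2 ^ ((1:ℝ)/2) := by
    rw [← Real.rpow_add two_pos]; norm_num
  have e4 : (2:ℝ) ^ ((1:ℝ)/2) ≤ 2 := by
    calc (2:ℝ) ^ ((1:ℝ)/2) ≤ 2 ^ (1:ℝ) :=
          Real.rpow_le_rpow_of_exponent_le one_le_two (by norm_num)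
      _ = 2 := Real.rpow_one 2
  set P : ℝ := A1 ^ ((1:ℝ)/4) * A2 ^ ((1:ℝ)/4) * B1 ^ ((1:ℝ)/4) * B2 ^ ((1:ℝ)/4) * V ^ ((1:ℝ)/2)
    with hP
  have hPnn : 0 ≤ P := by
    rw [hP]; positivity
  calc 12 * (((2*K) ^ ((1:ℝ)/2) * A1 ^ ((1:ℝ)/4) * (2*A2) ^ ((1:ℝ)/4))
        * ((2*K) ^ ((1:ℝ)/2) * B1 ^ ((1:ℝ)/4) * (2*B2) ^ ((1:ℝ)/4))
        * V ^ ((1:ℝ)/2))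
      = (12 * ((2*K) ^ ((1:ℝ)/2) * (2*K) ^ ((1:ℝ)/2)) * (2 ^ ((1:ℝ)/4) * 2 ^ ((1:ℝ)/4))) * P := by
        rw [e1, e1', hP]; ring
    _ = (24 * K * 2 ^ ((1:ℝ)/2)) * P := by rw [e2, e3]; ring
    _ ≤ (48 * (K + 1)) * P := by
        apply mul_le_mul_of_nonneg_right _ hPnn
        nlinarith [Real.rpow_nonneg (by norm_num : (0:ℝ) ≤ 2) ((1:ℝ)/2)]
    _ = 48 * (K + 1) * A1 ^ ((1:ℝ)/4) * A2 ^ ((1:ℝ)/4) * B1 ^ ((1:ℝ)/4) * B2 ^ ((1:ℝ)/4)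
        * V ^ ((1:ℝ)/2) := by rw [hP]; ring

lemma term_bound (d b : (Fin 2 → ℝ) → (Fin 3 → ℝ)) (v : (Fin 2 → ℝ) → (Fin 2 → ℝ))
    (hd : ContDiff ℝ (⊤ : ℕ∞) d) (hsd : HasCompactSupport d)
    (hb : ContDiff ℝ (⊤ : ℕ∞) b) (hsb : HasCompactSupport b)
    (hv : ContDiff ℝ (⊤ : ℕ∞) v) (hsv : HasCompactSupport v) (i j : Fin 2) (k : Fin 3) :
    (∫ x, |fderiv ℝ d x (Pi.single i 1) k * fderiv ℝ b x (Pi.single j 1) k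
        * fderiv ℝ v x (Pi.single i 1) j|)
      ≤ ((2*(K0:ℝ)) ^ ((1:ℝ)/2) * ((∫ x, S1 d x) + (∫ x, S2 d x)) ^ ((1:ℝ)/4)
            * (2 * ((∫ x, S1 d x) + (∫ x, S2 d x) + (∫ x, S3 d x))) ^ ((1:ℝ)/4))
        * ((2*(K0:ℝ)) ^ ((1:ℝ)/2) * ((∫ x, S1 b x) + (∫ x, S2 b x)) ^ ((1:ℝ)/4)
            * (2 * ((∫ x, S1 b x) + (∫ x, S2 b x) + (∫ x, S3 b x))) ^ ((1:ℝ)/4))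
        * (∫ x, ∑ i', ∑ j', (fderiv ℝ v x (Pi.single i' 1) j') ^ 2) ^ ((1:ℝ)/2) := by
  set f : (Fin 2 → ℝ) → ℝ := fun x => fderiv ℝ d x (Pi.single i 1) k with hf_def
  set g : (Fin 2 → ℝ) → ℝ := fun x => fderiv ℝ b x (Pi.single j 1) k with hg_def
  set h : (Fin 2 → ℝ) → ℝ := fun x => fderiv ℝ v x (Pi.single i 1) j with hh_def
  have hfc : Continuous f := (comp_props d hd hsd i k).1.continuous
  have hgc : Continuous g := (comp_props b hb hsb j k).1.continuous
  have hhc : Continuous h := (comp_props v hv hsv i j).1.continuous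
  have hfs : HasCompactSupport f := (comp_props d hd hsd i k).2.1
  have hT1 : HasCompactSupport (fun x => f x * g x) := hfs.mul_right
  have hT2 : HasCompactSupport (fun x => f x * g x * h x) := hT1.mul_right
  have hTc : Continuous (fun x => f x * g x * h x) := ((hfc.mul hgc).mul hhc)
  have habs_int : Integrable (fun x => |f x * g x * h x|) (volume : Measure (Fin 2 → ℝ)) :=
    (cc_integrable _ hTc hT2).abs
  -- nonnegativity of the real quantities
  have hA1 : (0:ℝ) ≤ (∫ x, S1 d x) + (∫ x, S2 d x) :=
    add_nonneg (integral_nonneg fun x => Finset.sum_nonneg fun _ _ => sq_nonneg _)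
      (integral_nonneg fun x => Finset.sum_nonneg fun _ _ => Finset.sum_nonneg fun _ _ => sq_nonneg _)
  have hA2 : (0:ℝ) ≤ (∫ x, S1 d x) + (∫ x, S2 d x) + (∫ x, S3 d x) :=
    add_nonneg hA1 (integral_nonneg fun x => Finset.sum_nonneg fun _ _ =>
      Finset.sum_nonneg fun _ _ => Finset.sum_nonneg fun _ _ => sq_nonneg _)
  have hB1 : (0:ℝ) ≤ (∫ x, S1 b x) + (∫ x, S2 b x) :=
    add_nonneg (integral_nonneg fun x => Finset.sum_nonneg fun _ _ => sq_nonneg _)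
      (integral_nonneg fun x => Finset.sum_nonneg fun _ _ => Finset.sum_nonneg fun _ _ => sq_nonneg _)
  have hB2 : (0:ℝ) ≤ (∫ x, S1 b x) + (∫ x, S2 b x) + (∫ x, S3 b x) :=
    add_nonneg hB1 (integral_nonneg fun x => Finset.sum_nonneg fun _ _ =>
      Finset.sum_nonneg fun _ _ => Finset.sum_nonneg fun _ _ => sq_nonneg _)
  have hV : (0:ℝ) ≤ ∫ x, ∑ i', ∑ j', (fderiv ℝ v x (Pi.single i' 1) j') ^ 2 :=
    integral_nonneg fun x => Finset.sum_nonneg fun _ _ => Finset.sum_nonneg fun _ _ => sq_nonneg _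
  have hK : (0:ℝ) ≤ 2 * (K0:ℝ) := by positivity
  -- ENNReal computation
  have step0 : ENNReal.ofReal (∫ x, |f x * g x * h x|)
      = ∫⁻ x, (‖f x‖₊ : ℝ≥0∞) * ‖g x‖₊ * ‖h x‖₊ := by
    rw [ofReal_integral_eq_lintegral_ofReal habs_int
      (Filter.Eventually.of_forall fun x => abs_nonneg _)]
    apply lintegral_congr
    intro x
    rw [abs_mul, abs_mul, ENNReal.ofReal_mul (by positivity),
      ENNReal.ofReal_mul (abs_nonneg _), ← Real.norm_eq_abs, ← Real.norm_eq_abs,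
      ← Real.norm_eq_abs, ofReal_norm, ofReal_norm,
      ofReal_norm]
    rfl
  have ck : ((2:ℝ≥0∞) * K0) = ENNReal.ofReal (2*(K0:ℝ)) := by
    rw [ENNReal.ofReal_mul (by norm_num)]
    simp [ENNReal.ofReal_coe_nnreal]
  have pack : ∀ (X Y : ℝ), 0 ≤ X → 0 ≤ Y →
      ((2 * K0 : ℝ≥0∞)) ^ ((1:ℝ)/2) * (ENNReal.ofReal X) ^ ((1:ℝ)/4)
        * (ENNReal.ofReal (2 * Y)) ^ ((1:ℝ)/4)
      = ENNReal.ofReal ((2*(K0:ℝ)) ^ ((1:ℝ)/2) * X ^ ((1:ℝ)/4) * (2*Y) ^ ((1:ℝ)/4)) := by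
    intro X Y hX hY
    rw [ck, ENNReal.ofReal_rpow_of_nonneg hK (by norm_num),
      ENNReal.ofReal_rpow_of_nonneg hX (by norm_num),
      ENNReal.ofReal_rpow_of_nonneg (by positivity) (by norm_num),
      ← ENNReal.ofReal_mul (by positivity), ← ENNReal.ofReal_mul (by positivity)]
  have packV : (ENNReal.ofReal (∫ x, ∑ i', ∑ j', (fderiv ℝ v x (Pi.single i' 1) j') ^ 2)) ^ ((1:ℝ)/2)
      = ENNReal.ofReal ((∫ x, ∑ i', ∑ j', (fderiv ℝ v x (Pi.single i' 1) j') ^ 2) ^ ((1:ℝ)/2)) :=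
    ENNReal.ofReal_rpow_of_nonneg hV (by norm_num)
  have chain : ENNReal.ofReal (∫ x, |f x * g x * h x|)
      ≤ ENNReal.ofReal (((2*(K0:ℝ)) ^ ((1:ℝ)/2) * ((∫ x, S1 d x) + (∫ x, S2 d x)) ^ ((1:ℝ)/4)
            * (2 * ((∫ x, S1 d x) + (∫ x, S2 d x) + (∫ x, S3 d x))) ^ ((1:ℝ)/4))
        * ((2*(K0:ℝ)) ^ ((1:ℝ)/2) * ((∫ x, S1 b x) + (∫ x, S2 b x)) ^ ((1:ℝ)/4)
            * (2 * ((∫ x, S1 b x) + (∫ x, S2 b x) + (∫ x, S3 b x))) ^ ((1:ℝ)/4))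
        * (∫ x, ∑ i', ∑ j', (fderiv ℝ v x (Pi.single i' 1) j') ^ 2) ^ ((1:ℝ)/2)) := by
    rw [step0]
    calc ∫⁻ x, (‖f x‖₊ : ℝ≥0∞) * ‖g x‖₊ * ‖h x‖₊
        ≤ eLpNorm f 4 volume * eLpNorm g 4 volume * eLpNorm h 2 volume :=
          holder3 f g h hfc hgc hhc
      _ ≤ (((2 * K0 : ℝ≥0∞)) ^ ((1:ℝ)/2)
            * (ENNReal.ofReal ((∫ x, S1 d x) + (∫ x, S2 d x))) ^ ((1:ℝ)/4)
            * (ENNReal.ofReal (2 * ((∫ x, S1 d x) + (∫ x, S2 d x) + (∫ x, S3 d x)))) ^ ((1:ℝ)/4))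
          * (((2 * K0 : ℝ≥0∞)) ^ ((1:ℝ)/2)
            * (ENNReal.ofReal ((∫ x, S1 b x) + (∫ x, S2 b x))) ^ ((1:ℝ)/4)
            * (ENNReal.ofReal (2 * ((∫ x, S1 b x) + (∫ x, S2 b x) + (∫ x, S3 b x)))) ^ ((1:ℝ)/4))
          * (ENNReal.ofReal (∫ x, ∑ i', ∑ j', (fderiv ℝ v x (Pi.single i' 1) j') ^ 2)) ^ ((1:ℝ)/2) :=
          mul_le_mul' (mul_le_mul' (main_w_bound d hd hsd i k) (main_w_bound b hb hsb j k))
            (v_bound v hv hsv i j)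
      _ = _ := by
          rw [pack _ _ hA1 hA2, pack _ _ hB1 hB2, packV,
            ← ENNReal.ofReal_mul (by positivity), ← ENNReal.ofReal_mul (by positivity)]
  exact (ENNReal.ofReal_le_ofReal_iff (by positivity)).1 chain

/-- Lemma 2.3: `|m(d,b,v)| ≤ C ‖d‖_{H¹}^{1/2} ‖d‖_{H²}^{1/2} ‖b‖_{H¹}^{1/2} ‖b‖_{H²}^{1/2} ‖∇v‖_{L²}`
for smooth compactly supported `d b : ℝ² → ℝ³` and `v : ℝ² → ℝ²`. -/
theorem m_estimate :
    ∃ C : ℝ, 0 < C ∧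
      ∀ (d b : (Fin 2 → ℝ) → (Fin 3 → ℝ)) (v : (Fin 2 → ℝ) → (Fin 2 → ℝ)),
        ContDiff ℝ (⊤ : ℕ∞) d → HasCompactSupport d → ContDiff ℝ (⊤ : ℕ∞) b → HasCompactSupport b →
        ContDiff ℝ (⊤ : ℕ∞) v → HasCompactSupport v →
        |∫ x : Fin 2 → ℝ, ∑ i : Fin 2, ∑ j : Fin 2, ∑ k : Fin 3,
            fderiv ℝ d x (Pi.single i 1) k * fderiv ℝ b x (Pi.single j 1) k
              * fderiv ℝ v x (Pi.single i 1) j|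
          ≤ C * ((∫ x : Fin 2 → ℝ, ∑ k, (d x k) ^ 2)
                  + (∫ x : Fin 2 → ℝ, ∑ i, ∑ k, (fderiv ℝ d x (Pi.single i 1) k) ^ 2))
                ^ ((1 : ℝ) / 4)
              * ((∫ x : Fin 2 → ℝ, ∑ k, (d x k) ^ 2)
                  + (∫ x : Fin 2 → ℝ, ∑ i, ∑ k, (fderiv ℝ d x (Pi.single i 1) k) ^ 2)
                  + (∫ x : Fin 2 → ℝ, ∑ i, ∑ i', ∑ k,
                      (fderiv ℝ (fun y => fderiv ℝ d y (Pi.single i' 1)) x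
                        (Pi.single i 1) k) ^ 2))
                ^ ((1 : ℝ) / 4)
              * ((∫ x : Fin 2 → ℝ, ∑ k, (b x k) ^ 2)
                  + (∫ x : Fin 2 → ℝ, ∑ i, ∑ k, (fderiv ℝ b x (Pi.single i 1) k) ^ 2))
                ^ ((1 : ℝ) / 4)
              * ((∫ x : Fin 2 → ℝ, ∑ k, (b x k) ^ 2)
                  + (∫ x : Fin 2 → ℝ, ∑ i, ∑ k, (fderiv ℝ b x (Pi.single i 1) k) ^ 2)
                  + (∫ x : Fin 2 → ℝ, ∑ i, ∑ i', ∑ k,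
                      (fderiv ℝ (fun y => fderiv ℝ b y (Pi.single i' 1)) x
                        (Pi.single i 1) k) ^ 2))
                ^ ((1 : ℝ) / 4)
              * (∫ x : Fin 2 → ℝ, ∑ i, ∑ j, (fderiv ℝ v x (Pi.single i 1) j) ^ 2)
                ^ ((1 : ℝ) / 2) := by
  refine ⟨48 * ((K0:ℝ) + 1), by positivity, ?_⟩
  intro d b v hd hsd hb hsb hv hsv
  have hTint : ∀ (i j : Fin 2) (k : Fin 3), Integrable
      (fun x => fderiv ℝ d x (Pi.single i 1) k * fderiv ℝ b x (Pi.single j 1) k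
        * fderiv ℝ v x (Pi.single i 1) j) (volume : Measure (Fin 2 → ℝ)) := by
    intro i j k
    have hfc := (comp_props d hd hsd i k).1.continuous
    have hgc := (comp_props b hb hsb j k).1.continuous
    have hhc := (comp_props v hv hsv i j).1.continuous
    have hfs : HasCompactSupport (fun x => fderiv ℝ d x (Pi.single i 1) k) :=
      (comp_props d hd hsd i k).2.1
    have hT1 : HasCompactSupport (fun x => fderiv ℝ d x (Pi.single i 1) k
        * fderiv ℝ b x (Pi.single j 1) k) := hfs.mul_right
    have hT2 : HasCompactSupport (fun x => fderiv ℝ d x (Pi.single i 1) k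
        * fderiv ℝ b x (Pi.single j 1) k * fderiv ℝ v x (Pi.single i 1) j) := hT1.mul_right
    exact cc_integrable _ ((hfc.mul hgc).mul hhc) hT2
  have split : (∫ x : Fin 2 → ℝ, ∑ i : Fin 2, ∑ j : Fin 2, ∑ k : Fin 3,
        fderiv ℝ d x (Pi.single i 1) k * fderiv ℝ b x (Pi.single j 1) k
          * fderiv ℝ v x (Pi.single i 1) j)
      = ∑ i : Fin 2, ∑ j : Fin 2, ∑ k : Fin 3, ∫ x : Fin 2 → ℝ,
          fderiv ℝ d x (Pi.single i 1) k * fderiv ℝ b x (Pi.single j 1) k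
            * fderiv ℝ v x (Pi.single i 1) j := by
    rw [integral_finset_sum _ (fun i _ => integrable_finset_sum _
      (fun j _ => integrable_finset_sum _ (fun k _ => hTint i j k)))]
    refine Finset.sum_congr rfl fun i _ => ?_
    rw [integral_finset_sum _ (fun j _ => integrable_finset_sum _ (fun k _ => hTint i j k))]
    refine Finset.sum_congr rfl fun j _ => ?_
    exact integral_finset_sum _ (fun k _ => hTint i j k)
  rw [split]
  -- the common per-term bound
  set R : ℝ :=
    ((2*(K0:ℝ)) ^ ((1:ℝ)/2) * ((∫ x, S1 d x) + (∫ x, S2 d x)) ^ ((1:ℝ)/4)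
        * (2 * ((∫ x, S1 d x) + (∫ x, S2 d x) + (∫ x, S3 d x))) ^ ((1:ℝ)/4))
      * ((2*(K0:ℝ)) ^ ((1:ℝ)/2) * ((∫ x, S1 b x) + (∫ x, S2 b x)) ^ ((1:ℝ)/4)
          * (2 * ((∫ x, S1 b x) + (∫ x, S2 b x) + (∫ x, S3 b x))) ^ ((1:ℝ)/4))
      * (∫ x, ∑ i', ∑ j', (fderiv ℝ v x (Pi.single i' 1) j') ^ 2) ^ ((1:ℝ)/2) with hR
  calc |∑ i : Fin 2, ∑ j : Fin 2, ∑ k : Fin 3, ∫ x : Fin 2 → ℝ,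
        fderiv ℝ d x (Pi.single i 1) k * fderiv ℝ b x (Pi.single j 1) k
          * fderiv ℝ v x (Pi.single i 1) j|
      ≤ ∑ i : Fin 2, ∑ j : Fin 2, ∑ k : Fin 3, |∫ x : Fin 2 → ℝ,
          fderiv ℝ d x (Pi.single i 1) k * fderiv ℝ b x (Pi.single j 1) k
            * fderiv ℝ v x (Pi.single i 1) j| :=
        (Finset.abs_sum_le_sum_abs _ _).trans (Finset.sum_le_sum fun i _ =>
          (Finset.abs_sum_le_sum_abs _ _).trans (Finset.sum_le_sum fun j _ =>
            Finset.abs_sum_le_sum_abs _ _))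
    _ ≤ ∑ _i : Fin 2, ∑ _j : Fin 2, ∑ _k : Fin 3, R := by
        refine Finset.sum_le_sum fun i _ => Finset.sum_le_sum fun j _ =>
          Finset.sum_le_sum fun k _ => ?_
        calc |∫ x : Fin 2 → ℝ, fderiv ℝ d x (Pi.single i 1) k * fderiv ℝ b x (Pi.single j 1) k
              * fderiv ℝ v x (Pi.single i 1) j|
            ≤ ∫ x : Fin 2 → ℝ, |fderiv ℝ d x (Pi.single i 1) k * fderiv ℝ b x (Pi.single j 1) k
              * fderiv ℝ v x (Pi.single i 1) j| := by
              simpa only [Real.norm_eq_abs] using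
                norm_integral_le_integral_norm (μ := (volume : Measure (Fin 2 → ℝ)))
                  (fun x => fderiv ℝ d x (Pi.single i 1) k * fderiv ℝ b x (Pi.single j 1) k
                    * fderiv ℝ v x (Pi.single i 1) j)
          _ ≤ R := term_bound d b v hd hsd hb hsb hv hsv i j k
    _ = 12 * R := by
        simp [Finset.sum_const, Finset.card_univ]
        ring
    _ ≤ 48 * ((K0:ℝ) + 1) * ((∫ x, S1 d x) + (∫ x, S2 d x)) ^ ((1:ℝ)/4)
        * ((∫ x, S1 d x) + (∫ x, S2 d x) + (∫ x, S3 d x)) ^ ((1:ℝ)/4)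
        * ((∫ x, S1 b x) + (∫ x, S2 b x)) ^ ((1:ℝ)/4)
        * ((∫ x, S1 b x) + (∫ x, S2 b x) + (∫ x, S3 b x)) ^ ((1:ℝ)/4)
        * (∫ x, ∑ i', ∑ j', (fderiv ℝ v x (Pi.single i' 1) j') ^ 2) ^ ((1:ℝ)/2) := by
        rw [hR]
        refine final_arith (K0:ℝ) _ _ _ _ _ (by positivity) ?_ ?_ ?_ ?_ ?_
        · exact add_nonneg (integral_nonneg fun x => Finset.sum_nonneg fun _ _ => sq_nonneg _)
            (integral_nonneg fun x => Finset.sum_nonneg fun _ _ =>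
              Finset.sum_nonneg fun _ _ => sq_nonneg _)
        · exact add_nonneg (add_nonneg
            (integral_nonneg fun x => Finset.sum_nonneg fun _ _ => sq_nonneg _)
            (integral_nonneg fun x => Finset.sum_nonneg fun _ _ =>
              Finset.sum_nonneg fun _ _ => sq_nonneg _))
            (integral_nonneg fun x => Finset.sum_nonneg fun _ _ =>
              Finset.sum_nonneg fun _ _ => Finset.sum_nonneg fun _ _ => sq_nonneg _)
        · exact add_nonneg (integral_nonneg fun x => Finset.sum_nonneg fun _ _ => sq_nonneg _)
            (integral_nonneg fun x => Finset.sum_nonneg fun _ _ =>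
              Finset.sum_nonneg fun _ _ => sq_nonneg _)
        · exact add_nonneg (add_nonneg
            (integral_nonneg fun x => Finset.sum_nonneg fun _ _ => sq_nonneg _)
            (integral_nonneg fun x => Finset.sum_nonneg fun _ _ =>
              Finset.sum_nonneg fun _ _ => sq_nonneg _))
            (integral_nonneg fun x => Finset.sum_nonneg fun _ _ =>
              Finset.sum_nonneg fun _ _ => Finset.sum_nonneg fun _ _ => sq_nonneg _)
        · exact integral_nonneg fun x => Finset.sum_nonneg fun _ _ =>
            Finset.sum_nonneg fun _ _ => sq_nonneg _
    _ = 48 * ((K0:ℝ) + 1) * ((∫ x : Fin 2 → ℝ, ∑ k, (d x k) ^ 2)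
                  + (∫ x : Fin 2 → ℝ, ∑ i, ∑ k, (fderiv ℝ d x (Pi.single i 1) k) ^ 2))
                ^ ((1 : ℝ) / 4)
              * ((∫ x : Fin 2 → ℝ, ∑ k, (d x k) ^ 2)
                  + (∫ x : Fin 2 → ℝ, ∑ i, ∑ k, (fderiv ℝ d x (Pi.single i 1) k) ^ 2)
                  + (∫ x : Fin 2 → ℝ, ∑ i, ∑ i', ∑ k,
                      (fderiv ℝ (fun y => fderiv ℝ d y (Pi.single i' 1)) x
                        (Pi.single i 1) k) ^ 2))
                ^ ((1 : ℝ) / 4)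
              * ((∫ x : Fin 2 → ℝ, ∑ k, (b x k) ^ 2)
                  + (∫ x : Fin 2 → ℝ, ∑ i, ∑ k, (fderiv ℝ b x (Pi.single i 1) k) ^ 2))
                ^ ((1 : ℝ) / 4)
              * ((∫ x : Fin 2 → ℝ, ∑ k, (b x k) ^ 2)
                  + (∫ x : Fin 2 → ℝ, ∑ i, ∑ k, (fderiv ℝ b x (Pi.single i 1) k) ^ 2)
                  + (∫ x : Fin 2 → ℝ, ∑ i, ∑ i', ∑ k,
                      (fderiv ℝ (fun y => fderiv ℝ b y (Pi.single i' 1)) x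
                        (Pi.single i 1) k) ^ 2))
                ^ ((1 : ℝ) / 4)
              * (∫ x : Fin 2 → ℝ, ∑ i, ∑ j, (fderiv ℝ v x (Pi.single i 1) j) ^ 2)
                ^ ((1 : ℝ) / 2) := rfl
end

section
/- (Polarized balance law, Proposition 2.5.) Let u : ℝ² → ℝ² be a C¹, compactly supported, divergence-free vector field and let d, b : ℝ² → ℝ³ be C² maps. Then ∫_{ℝ²} Σ_{j=1}^{2} ( Σ_{i=1}^{2} ∂_i ( Σ_{k=1}^{3} [ (∂_i dᵏ)(∂_j bᵏ) + (∂_i bᵏ)(∂_j dᵏ) ] ) ) uʲ dx = ∫_{ℝ²} Σ_{i=1}^{2} Σ_{k=1}^{3} uⁱ (∂_i dᵏ)(Δbᵏ) dx + ∫_{ℝ²} Σ_{i=1}^{2} Σ_{k=1}^{3} uⁱ (∂_i bᵏ)(Δdᵏ) dx, where Δfᵏ = ∂₁∂₁fᵏ + ∂₂∂₂fᵏ. In the paper's notation this reads ⟨M(d,b),u⟩ + ⟨M(b,d),u⟩ = ⟨B₂(u,d),Δb⟩ + ⟨B₂(u,b),Δd⟩. -/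
open MeasureTheory

lemma comp_fderiv_apply {n m : ℕ} {f : (Fin n → ℝ) → (Fin m → ℝ)} {x : Fin n → ℝ}
    (hf : DifferentiableAt ℝ f x) (j : Fin m) (v : Fin n → ℝ) :
    fderiv ℝ (fun y => f y j) x v = fderiv ℝ f x v j := by
  have h : HasFDerivAt (fun y => f y j)
      ((ContinuousLinearMap.proj j).comp (fderiv ℝ f x)) x :=
    ((ContinuousLinearMap.proj j).hasFDerivAt.comp x hf.hasFDerivAt :)
  rw [h.fderiv]; rfl

-- second derivative component helper
noncomputable def evalCLM {n m : ℕ} (w : Fin n → ℝ) (k : Fin m) :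
    ((Fin n → ℝ) →L[ℝ] (Fin m → ℝ)) →L[ℝ] ℝ :=
  (ContinuousLinearMap.proj k).comp (ContinuousLinearMap.apply ℝ (Fin m → ℝ) w)

lemma D_hasFDerivAt {n m : ℕ} {f : (Fin n → ℝ) → (Fin m → ℝ)}
    (hf : ContDiff ℝ 2 f) (w : Fin n → ℝ) (k : Fin m) (x : Fin n → ℝ) :
    HasFDerivAt (fun y => fderiv ℝ f y w k)
      ((evalCLM w k).comp (fderiv ℝ (fderiv ℝ f) x)) x := by
  have h1 : ContDiff ℝ 1 (fderiv ℝ f) := hf.fderiv_right (by norm_num)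
  exact (evalCLM w k).hasFDerivAt.comp x ((h1.differentiable one_ne_zero) x).hasFDerivAt

lemma D_contDiff {n m : ℕ} {f : (Fin n → ℝ) → (Fin m → ℝ)}
    (hf : ContDiff ℝ 2 f) (w : Fin n → ℝ) (k : Fin m) :
    ContDiff ℝ 1 (fun y => fderiv ℝ f y w k) :=
  (evalCLM w k).contDiff.comp (hf.fderiv_right (by norm_num))

lemma D_fderiv_apply {n m : ℕ} {f : (Fin n → ℝ) → (Fin m → ℝ)}
    (hf : ContDiff ℝ 2 f) (w : Fin n → ℝ) (k : Fin m) (x v : Fin n → ℝ) :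
    fderiv ℝ (fun y => fderiv ℝ f y w k) x v = fderiv ℝ (fderiv ℝ f) x v w k := by
  rw [(D_hasFDerivAt hf w k x).fderiv]; rfl

lemma S_symm {n m : ℕ} {f : (Fin n → ℝ) → (Fin m → ℝ)}
    (hf : ContDiff ℝ 2 f) (x v w : Fin n → ℝ) (k : Fin m) :
    fderiv ℝ (fderiv ℝ f) x v w k = fderiv ℝ (fderiv ℝ f) x w v k := by
  rw [hf.contDiffAt.isSymmSndFDerivAt (by simp) v w]

lemma S_cont {n m : ℕ} {f : (Fin n → ℝ) → (Fin m → ℝ)}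
    (hf : ContDiff ℝ 2 f) (v w : Fin n → ℝ) (k : Fin m) :
    Continuous (fun x => fderiv ℝ (fderiv ℝ f) x v w k) := by
  have h1 : ContDiff ℝ 1 (fderiv ℝ f) := hf.fderiv_right (by norm_num)
  have h0 : Continuous (fderiv ℝ (fderiv ℝ f)) := h1.continuous_fderiv one_ne_zero
  exact (continuous_apply k).comp ((h0.clm_apply continuous_const).clm_apply continuous_const)

lemma D_diff {n m : ℕ} {f : (Fin n → ℝ) → (Fin m → ℝ)}
    (hf : ContDiff ℝ 2 f) (w : Fin n → ℝ) (k : Fin m) (x : Fin n → ℝ) :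
    DifferentiableAt ℝ (fun y => fderiv ℝ f y w k) x :=
  ((D_contDiff hf w k).differentiable one_ne_zero) x

lemma mulD_fderiv_apply {n m : ℕ} {f g : (Fin n → ℝ) → (Fin m → ℝ)}
    (hf : ContDiff ℝ 2 f) (hg : ContDiff ℝ 2 g) (w₁ w₂ : Fin n → ℝ) (k : Fin m)
    (x v : Fin n → ℝ) :
    fderiv ℝ (fun y => fderiv ℝ f y w₁ k * fderiv ℝ g y w₂ k) x v
      = fderiv ℝ (fderiv ℝ f) x v w₁ k * fderiv ℝ g x w₂ k
        + fderiv ℝ f x w₁ k * fderiv ℝ (fderiv ℝ g) x v w₂ k := by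
  rw [fderiv_fun_mul (D_diff hf w₁ k x) (D_diff hg w₂ k x)]
  simp only [ContinuousLinearMap.add_apply, ContinuousLinearMap.smul_apply, smul_eq_mul,
    D_fderiv_apply hf w₁ k x v, D_fderiv_apply hg w₂ k x v]
  ring

lemma inner_fderiv_apply {n m : ℕ} {f g : (Fin n → ℝ) → (Fin m → ℝ)}
    (hf : ContDiff ℝ 2 f) (hg : ContDiff ℝ 2 g) (w₁ w₂ : Fin n → ℝ)
    (x v : Fin n → ℝ) :
    fderiv ℝ (fun y => ∑ k, (fderiv ℝ f y w₁ k * fderiv ℝ g y w₂ k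
        + fderiv ℝ g y w₁ k * fderiv ℝ f y w₂ k)) x v
      = ∑ k, (fderiv ℝ (fderiv ℝ f) x v w₁ k * fderiv ℝ g x w₂ k
        + fderiv ℝ f x w₁ k * fderiv ℝ (fderiv ℝ g) x v w₂ k
        + (fderiv ℝ (fderiv ℝ g) x v w₁ k * fderiv ℝ f x w₂ k
        + fderiv ℝ g x w₁ k * fderiv ℝ (fderiv ℝ f) x v w₂ k)) := by
  rw [fderiv_fun_sum (fun k _ => ((D_diff hf w₁ k x).fun_mul (D_diff hg w₂ k x)).fun_add
      ((D_diff hg w₁ k x).fun_mul (D_diff hf w₂ k x)))]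
  rw [ContinuousLinearMap.sum_apply]
  refine Finset.sum_congr rfl fun k _ => ?_
  rw [fderiv_fun_add ((D_diff hf w₁ k x).fun_mul (D_diff hg w₂ k x))
      ((D_diff hg w₁ k x).fun_mul (D_diff hf w₂ k x))]
  rw [ContinuousLinearMap.add_apply, mulD_fderiv_apply hf hg w₁ w₂ k x v,
    mulD_fderiv_apply hg hf w₁ w₂ k x v]

lemma integral_dot_grad_eq_zero
    (u : (Fin 2 → ℝ) → (Fin 2 → ℝ)) (hu : ContDiff ℝ 1 u) (hu_supp : HasCompactSupport u)
    (hu_div : ∀ x, ∑ i, fderiv ℝ u x (Pi.single i 1) i = 0)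
    (F : (Fin 2 → ℝ) → ℝ) (hF : ContDiff ℝ 1 F) :
    ∫ x : Fin 2 → ℝ, ∑ j : Fin 2, fderiv ℝ F x (Pi.single j 1) * u x j = 0 := by
  have hudiff : Differentiable ℝ u := hu.differentiable one_ne_zero
  have hucomp : ∀ j : Fin 2, ContDiff ℝ 1 (fun x => u x j) := fun j =>
    (ContinuousLinearMap.proj j : (Fin 2 → ℝ) →L[ℝ] ℝ).contDiff.comp hu
  have hucs : ∀ j : Fin 2, HasCompactSupport (fun x => u x j) := fun j =>
    hu_supp.comp_left (g := fun v : Fin 2 → ℝ => v j) rfl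
  have hFc : Continuous F := hF.continuous
  have hdF : ∀ v : Fin 2 → ℝ, Continuous (fun x => fderiv ℝ F x v) := fun v =>
    (hF.continuous_fderiv one_ne_zero).clm_apply continuous_const
  have hduc : ∀ (j : Fin 2) (v : Fin 2 → ℝ),
      Continuous (fun x => fderiv ℝ (fun y => u y j) x v) := fun j v =>
    ((hucomp j).continuous_fderiv one_ne_zero).clm_apply continuous_const
  have hducs : ∀ (j : Fin 2) (v : Fin 2 → ℝ),
      HasCompactSupport (fun x => fderiv ℝ (fun y => u y j) x v) := fun j v =>
    (hucs j).fderiv_apply ℝ v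
  have hint : ∀ j : Fin 2, Integrable (fun x => fderiv ℝ F x (Pi.single j 1) * u x j) :=
    fun j => (((hdF _).mul ((continuous_apply j).comp hu.continuous)).integrable_of_hasCompactSupport
      ((hucs j).mul_left))
  rw [integral_finset_sum _ (fun j _ => hint j)]
  have hibp : ∀ j : Fin 2, (∫ x : Fin 2 → ℝ, fderiv ℝ F x (Pi.single j 1) * u x j)
      = - ∫ x : Fin 2 → ℝ, fderiv ℝ (fun y => u y j) x (Pi.single j 1) * F x := by
    intro j
    have := integral_mul_fderiv_eq_neg_fderiv_mul_of_integrable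
      (μ := (volume : Measure (Fin 2 → ℝ))) (f := fun x => u x j) (g := F)
      (v := Pi.single j 1)
      (((hduc j _).mul hFc).integrable_of_hasCompactSupport ((hducs j _).mul_right))
      ((((continuous_apply j).comp hu.continuous).mul (hdF _)).integrable_of_hasCompactSupport
        ((hucs j).mul_right))
      ((((continuous_apply j).comp hu.continuous).mul hFc).integrable_of_hasCompactSupport
        ((hucs j).mul_right))
      (fun x _ => (hucomp j).differentiable one_ne_zero x) (fun x _ => hF.differentiable one_ne_zero x)
    rw [← this]
    congr 1; ext x; ring
  simp_rw [hibp]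
  rw [Finset.sum_neg_distrib, ← integral_finset_sum]
  · rw [neg_eq_zero]
    have : ∀ x : Fin 2 → ℝ, (∑ j : Fin 2, fderiv ℝ (fun y => u y j) x (Pi.single j 1) * F x) = 0 := by
      intro x
      have : ∀ j : Fin 2, fderiv ℝ (fun y => u y j) x (Pi.single j 1)
          = fderiv ℝ u x (Pi.single j 1) j := fun j => comp_fderiv_apply (hudiff x) j _
      simp_rw [this, ← Finset.sum_mul, hu_div x, zero_mul]
    simp_rw [this]
    simp
  · exact fun j _ => ((hduc j _).mul hFc).integrable_of_hasCompactSupport ((hducs j _).mul_right)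

lemma F_contDiff {n m : ℕ} {f g : (Fin n → ℝ) → (Fin m → ℝ)}
    (hf : ContDiff ℝ 2 f) (hg : ContDiff ℝ 2 g) :
    ContDiff ℝ 1 (fun y => ∑ i : Fin n, ∑ k : Fin m,
      fderiv ℝ f y (Pi.single i 1) k * fderiv ℝ g y (Pi.single i 1) k) :=
  ContDiff.sum fun _ _ => ContDiff.sum fun k _ =>
    (D_contDiff hf _ k).mul (D_contDiff hg _ k)

lemma F_fderiv_apply {n m : ℕ} {f g : (Fin n → ℝ) → (Fin m → ℝ)}
    (hf : ContDiff ℝ 2 f) (hg : ContDiff ℝ 2 g) (x v : Fin n → ℝ) :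
    fderiv ℝ (fun y => ∑ i : Fin n, ∑ k : Fin m,
        fderiv ℝ f y (Pi.single i 1) k * fderiv ℝ g y (Pi.single i 1) k) x v
      = ∑ i : Fin n, ∑ k : Fin m,
        (fderiv ℝ (fderiv ℝ f) x v (Pi.single i 1) k * fderiv ℝ g x (Pi.single i 1) k
          + fderiv ℝ f x (Pi.single i 1) k * fderiv ℝ (fderiv ℝ g) x v (Pi.single i 1) k) := by
  rw [fderiv_fun_sum (fun i _ => DifferentiableAt.fun_sum (fun k _ =>
    (D_diff hf _ k x).fun_mul (D_diff hg _ k x)))]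
  rw [ContinuousLinearMap.sum_apply]
  refine Finset.sum_congr rfl fun i _ => ?_
  rw [fderiv_fun_sum (fun k _ => (D_diff hf _ k x).fun_mul (D_diff hg _ k x)),
    ContinuousLinearMap.sum_apply]
  exact Finset.sum_congr rfl fun k _ => mulD_fderiv_apply hf hg _ _ k x v

/-- Polarized balance law (Proposition 2.5): for a `C¹` compactly supported
divergence-free `u : ℝ² → ℝ²` and `C²` maps `d b : ℝ² → ℝ³`,
`⟨M(d,b),u⟩ + ⟨M(b,d),u⟩ = ⟨B₂(u,d),Δb⟩ + ⟨B₂(u,b),Δd⟩`. -/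
theorem polarized_balance_law
    (u : (Fin 2 → ℝ) → (Fin 2 → ℝ)) (d b : (Fin 2 → ℝ) → (Fin 3 → ℝ))
    (hu : ContDiff ℝ 1 u) (hu_supp : HasCompactSupport u)
    (hu_div : ∀ x, ∑ i, fderiv ℝ u x (Pi.single i 1) i = 0)
    (hd : ContDiff ℝ 2 d) (hb : ContDiff ℝ 2 b) :
    (∫ x : Fin 2 → ℝ, ∑ j : Fin 2,
        (∑ i : Fin 2, fderiv ℝ
            (fun y => ∑ k : Fin 3,
              (fderiv ℝ d y (Pi.single i 1) k * fderiv ℝ b y (Pi.single j 1) k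
                + fderiv ℝ b y (Pi.single i 1) k * fderiv ℝ d y (Pi.single j 1) k))
            x (Pi.single i 1)) * u x j)
      = (∫ x : Fin 2 → ℝ, ∑ i : Fin 2, ∑ k : Fin 3,
            u x i * fderiv ℝ d x (Pi.single i 1) k
              * (∑ i' : Fin 2, fderiv ℝ
                  (fun y => fderiv ℝ b y (Pi.single i' 1) k) x (Pi.single i' 1)))
        + ∫ x : Fin 2 → ℝ, ∑ i : Fin 2, ∑ k : Fin 3,
            u x i * fderiv ℝ b x (Pi.single i 1) k
              * (∑ i' : Fin 2, fderiv ℝ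
                  (fun y => fderiv ℝ d y (Pi.single i' 1) k) x (Pi.single i' 1)) := by
  have hzero : ∀ x ∉ tsupport u, u x = 0 := fun x hx => image_eq_zero_of_notMem_tsupport hx
  have hcu : Continuous u := hu.continuous
  have hDd : ∀ (w : Fin 2 → ℝ) (k : Fin 3), Continuous (fun x => fderiv ℝ d x w k) :=
    fun w k => (D_contDiff hd w k).continuous
  have hDb : ∀ (w : Fin 2 → ℝ) (k : Fin 3), Continuous (fun x => fderiv ℝ b x w k) :=
    fun w k => (D_contDiff hb w k).continuous
  have hF : ContDiff ℝ 1 (fun y => ∑ i : Fin 2, ∑ k : Fin 3,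
      fderiv ℝ d y (Pi.single i 1) k * fderiv ℝ b y (Pi.single i 1) k) := F_contDiff hd hb
  simp only [D_fderiv_apply hd, D_fderiv_apply hb]
  have key : ∀ x : Fin 2 → ℝ,
      (∑ j : Fin 2, (∑ i : Fin 2, fderiv ℝ
            (fun y => ∑ k : Fin 3,
              (fderiv ℝ d y (Pi.single i 1) k * fderiv ℝ b y (Pi.single j 1) k
                + fderiv ℝ b y (Pi.single i 1) k * fderiv ℝ d y (Pi.single j 1) k))
            x (Pi.single i 1)) * u x j)
      = ((∑ i : Fin 2, ∑ k : Fin 3,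
            u x i * fderiv ℝ d x (Pi.single i 1) k
              * (∑ i' : Fin 2, fderiv ℝ (fderiv ℝ b) x (Pi.single i' 1) (Pi.single i' 1) k))
        + (∑ i : Fin 2, ∑ k : Fin 3,
            u x i * fderiv ℝ b x (Pi.single i 1) k
              * (∑ i' : Fin 2, fderiv ℝ (fderiv ℝ d) x (Pi.single i' 1) (Pi.single i' 1) k)))
        + ∑ j : Fin 2, fderiv ℝ (fun y => ∑ i : Fin 2, ∑ k : Fin 3,
            fderiv ℝ d y (Pi.single i 1) k * fderiv ℝ b y (Pi.single i 1) k) x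
              (Pi.single j 1) * u x j := by
    intro x
    have h1 : ∀ k : Fin 3, fderiv ℝ (fderiv ℝ d) x (Pi.single (1 : Fin 2) 1)
        (Pi.single (0 : Fin 2) 1) k
        = fderiv ℝ (fderiv ℝ d) x (Pi.single (0 : Fin 2) 1) (Pi.single (1 : Fin 2) 1) k :=
      fun k => S_symm hd x _ _ k
    have h2 : ∀ k : Fin 3, fderiv ℝ (fderiv ℝ b) x (Pi.single (1 : Fin 2) 1)
        (Pi.single (0 : Fin 2) 1) k
        = fderiv ℝ (fderiv ℝ b) x (Pi.single (0 : Fin 2) 1) (Pi.single (1 : Fin 2) 1) k :=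
      fun k => S_symm hb x _ _ k
    simp only [inner_fderiv_apply hd hb, F_fderiv_apply hd hb]
    simp only [Fin.sum_univ_two, Fin.sum_univ_three, h1, h2]
    ring
  simp only [key]
  have hR1 : Integrable (fun x : Fin 2 → ℝ => ∑ i : Fin 2, ∑ k : Fin 3,
      u x i * fderiv ℝ d x (Pi.single i 1) k
        * (∑ i' : Fin 2, fderiv ℝ (fderiv ℝ b) x (Pi.single i' 1) (Pi.single i' 1) k)) := by
    apply Continuous.integrable_of_hasCompactSupport
    · exact continuous_finset_sum _ fun i _ => continuous_finset_sum _ fun k _ =>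
        (((continuous_apply i).comp hcu).mul (hDd _ k)).mul
          (continuous_finset_sum _ fun i' _ => S_cont hb _ _ k)
    · exact HasCompactSupport.intro hu_supp fun x hx => by simp [hzero x hx]
  have hR2 : Integrable (fun x : Fin 2 → ℝ => ∑ i : Fin 2, ∑ k : Fin 3,
      u x i * fderiv ℝ b x (Pi.single i 1) k
        * (∑ i' : Fin 2, fderiv ℝ (fderiv ℝ d) x (Pi.single i' 1) (Pi.single i' 1) k)) := by
    apply Continuous.integrable_of_hasCompactSupport
    · exact continuous_finset_sum _ fun i _ => continuous_finset_sum _ fun k _ =>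
        (((continuous_apply i).comp hcu).mul (hDb _ k)).mul
          (continuous_finset_sum _ fun i' _ => S_cont hd _ _ k)
    · exact HasCompactSupport.intro hu_supp fun x hx => by simp [hzero x hx]
  have hG : Integrable (fun x : Fin 2 → ℝ => ∑ j : Fin 2,
      fderiv ℝ (fun y => ∑ i : Fin 2, ∑ k : Fin 3,
        fderiv ℝ d y (Pi.single i 1) k * fderiv ℝ b y (Pi.single i 1) k) x
          (Pi.single j 1) * u x j) := by
    apply Continuous.integrable_of_hasCompactSupport
    · exact continuous_finset_sum _ fun j _ =>
        (((hF.continuous_fderiv one_ne_zero).clm_apply continuous_const).mul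
          ((continuous_apply j).comp hcu))
    · exact HasCompactSupport.intro hu_supp fun x hx => by simp [hzero x hx]
  have hR12 : Integrable (fun x : Fin 2 → ℝ => (∑ i : Fin 2, ∑ k : Fin 3,
          u x i * fderiv ℝ d x (Pi.single i 1) k
            * (∑ i' : Fin 2, fderiv ℝ (fderiv ℝ b) x (Pi.single i' 1) (Pi.single i' 1) k))
          + (∑ i : Fin 2, ∑ k : Fin 3,
          u x i * fderiv ℝ b x (Pi.single i 1) k
            * (∑ i' : Fin 2, fderiv ℝ (fderiv ℝ d) x (Pi.single i' 1) (Pi.single i' 1) k)))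
      volume := hR1.add hR2
  rw [integral_add hR12 hG,
    integral_add hR1 hR2,
    integral_dot_grad_eq_zero u hu hu_supp hu_div _ hF, add_zero]
end
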